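/- arXiv:2002.08359 — 8 statements merged into one kernel-verified Lean document; each statement's English description precedes it below -/
import Mathlib

section
/- The real line can be partitioned into continuum many pairwise disjoint Cantor sets (i.e., nonempty compact subsets of ℝ that are totally disconnected and have no isolated points). -/
/-- A Cantor set in ℝ: nonempty, compact, totally disconnected, with no isolated points. -/
def IsCantorSet (C : Set ℝ) : Prop :=
  C.Nonempty ∧ IsCompact C ∧ IsTotallyDisconnected C ∧ Perfect C

/-!
A real number `x` is uniquely `n - t` with `n ∈ ℤ` and `t ∈ (0, 1]`, and `t` has a unique binary
expansion with infinitely many ones; the lengths of the runs of zeros between consecutive ones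
identify `(0, 1]` with `ℕ → ℕ`, continuously for the product topology. Writing each run length as
`Nat.bit b k`, the point `x` is thus coded by `n`, a sequence `k : ℕ → ℕ` and a sequence
`b : ℕ → Bool`. Fixing `n` and `k` and letting `b` vary gives a continuous injective image of the
Cantor space `ℕ → Bool`, hence a Cantor set; these sets partition `ℝ`, and there are
`#(ℤ × (ℕ → ℕ)) = 𝔠` of them.
-/

open Set Function Filter Topology

instance Pi.perfectSpace {ι : Type*} [Infinite ι] {X : ι → Type*} [∀ i, TopologicalSpace (X i)]
    [∀ i, Nontrivial (X i)] : PerfectSpace (∀ i, X i) where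
  univ_preperfect x _ := by
    classical
    refine accPt_iff_nhds.2 fun U hU => ?_
    rw [nhds_pi, Filter.mem_pi] at hU
    obtain ⟨I, hI, t, ht, hsub⟩ := hU
    obtain ⟨i, hi⟩ := hI.infinite_compl.nonempty
    obtain ⟨z, hz⟩ := exists_ne (x i)
    refine ⟨update x i z, ⟨hsub fun j hj => ?_, trivial⟩, fun h => hz (by simpa using congrFun h i)⟩
    rw [update_of_ne (ne_of_mem_of_not_mem hj hi)]
    exact mem_of_mem_nhds (ht j)

theorem isCantorSet_range {X : Type*} [TopologicalSpace X] [CompactSpace X] [Nonempty X]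
    [TotallyDisconnectedSpace X] [PerfectSpace X] {f : X → ℝ} (hf : Continuous f)
    (hinj : Injective f) : IsCantorSet (range f) := by
  have hemb := (hf.isClosedEmbedding hinj).isEmbedding
  refine ⟨range_nonempty f, isCompact_range hf, hemb.isTotallyDisconnected_range.2 inferInstance,
    (isCompact_range hf).isClosed, ?_⟩
  rintro _ ⟨x, rfl⟩
  simpa using (PerfectSpace.univ_preperfect x (mem_univ x)).map hf.continuousAt hinj

universe u v w in
theorem exists_partition_of_bijective {I : Type u} {J : Type v} {X : Type w} [Nonempty J]
    {Φ : I × J → X} (hΦ : Bijective Φ) :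
    ∃ P : Set (Set X), Cardinal.lift.{u} (Cardinal.mk P) = Cardinal.lift.{w} (Cardinal.mk I) ∧
      (∀ A ∈ P, ∃ i, A = range fun j => Φ (i, j)) ∧ P.PairwiseDisjoint id ∧ ⋃₀ P = univ := by
  set fiber : I → Set X := fun i => range fun j => Φ (i, j)
  have hfiber : Injective fiber := by
    intro i i' h
    obtain ⟨j⟩ := ‹Nonempty J›
    obtain ⟨j', hj'⟩ : Φ (i, j) ∈ fiber i' := h ▸ mem_range_self j
    exact congrArg Prod.fst (hΦ.1 hj').symm
  refine ⟨range fiber, Cardinal.mk_range_eq_of_injective hfiber, ?_, ?_, ?_⟩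
  · rintro _ ⟨i, rfl⟩
    exact ⟨i, rfl⟩
  · rintro _ ⟨i, rfl⟩ _ ⟨i', rfl⟩ hne
    refine disjoint_left.2 ?_
    rintro _ ⟨j, rfl⟩ ⟨j', hj'⟩
    exact hne (congrArg fiber (congrArg Prod.fst (hΦ.1 hj')).symm)
  · refine eq_univ_of_forall fun x => ?_
    obtain ⟨⟨i, j⟩, rfl⟩ := hΦ.2 x
    exact ⟨fiber i, mem_range_self i, j, rfl⟩

theorem bijective_intCast_sub {Y : Type*} {f : Y → ℝ} (hf : Injective f)
    (hrange : range f = Ioc 0 1) : Bijective fun p : ℤ × Y => (p.1 : ℝ) - f p.2 := by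
  have hfloor (n : ℤ) (y : Y) : ⌊(n : ℝ) - f y⌋ = n - 1 := by
    obtain ⟨hpos, hle⟩ : f y ∈ Ioc 0 1 := hrange ▸ mem_range_self y
    rw [Int.floor_eq_iff]
    push_cast
    constructor <;> linarith
  constructor
  · rintro ⟨n, y⟩ ⟨n', y'⟩ h
    obtain rfl : n = n' := by
      simpa using (hfloor n y).symm.trans ((congrArg Int.floor h).trans (hfloor n' y'))
    simp only [sub_right_inj] at h
    rw [hf h]
  · intro x
    obtain ⟨y, hy⟩ : ⌊x⌋ + 1 - x ∈ range f := by
      rw [hrange]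
      constructor <;> linarith [Int.floor_le x, Int.lt_floor_add_one x]
    exact ⟨(⌊x⌋ + 1, y), by simp [hy]⟩

theorem eq_of_mem_Ioc_pow {R : Type*} [Semiring R] [PartialOrder R] [IsOrderedRing R]
    {y x : R} (hy₀ : 0 ≤ y) (hy₁ : y ≤ 1) {a b : ℕ}
    (ha : x ∈ Ioc (y ^ (a + 1)) (y ^ a)) (hb : x ∈ Ioc (y ^ (b + 1)) (y ^ b)) : a = b := by
  have hnot_lt {m n : ℕ} (hm : x ∈ Ioc (y ^ (m + 1)) (y ^ m))
      (hn : x ∈ Ioc (y ^ (n + 1)) (y ^ n)) : ¬ m < n := fun hmn =>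
    (hn.2.trans (pow_le_pow_of_le_one hy₀ hy₁ hmn)).not_gt hm.1
  exact le_antisymm (not_lt.1 (hnot_lt hb ha)) (not_lt.1 (hnot_lt ha hb))

/-- `ofZeroRuns g` is the real number with binary expansion `0.0…01 0…01 0…01 …` whose `n`-th
block consists of `g n` zeros followed by a one; these are exactly the binary expansions with
infinitely many ones. -/
noncomputable def ofZeroRuns (g : ℕ → ℕ) : ℝ :=
  ∑' n, (1 / 2 : ℝ) ^ (n + 1 + ∑ i ∈ Finset.range (n + 1), g i)

theorem ofZeroRuns_term_le (g : ℕ → ℕ) (n : ℕ) :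
    (1 / 2 : ℝ) ^ (n + 1 + ∑ i ∈ Finset.range (n + 1), g i) ≤ (1 / 2) ^ (n + 1) :=
  pow_le_pow_of_le_one (by norm_num) (by norm_num) (Nat.le_add_right _ _)

theorem summable_ofZeroRuns (g : ℕ → ℕ) :
    Summable fun n => (1 / 2 : ℝ) ^ (n + 1 + ∑ i ∈ Finset.range (n + 1), g i) :=
  ((summable_nat_add_iff 1).2 summable_geometric_two).of_nonneg_of_le (fun _ => by positivity)
    (ofZeroRuns_term_le g)

theorem ofZeroRuns_mem_Ioc (g : ℕ → ℕ) : ofZeroRuns g ∈ Ioc 0 1 := by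
  refine ⟨(summable_ofZeroRuns g).tsum_pos (fun _ => by positivity) 0 (by positivity), ?_⟩
  calc ofZeroRuns g ≤ ∑' n : ℕ, (1 / 2 : ℝ) ^ (n + 1) :=
        (summable_ofZeroRuns g).tsum_le_tsum (ofZeroRuns_term_le g)
          ((summable_nat_add_iff 1).2 summable_geometric_two)
    _ = 1 := by simp only [pow_succ, tsum_mul_right, tsum_geometric_two]; norm_num

theorem ofZeroRuns_eq (g : ℕ → ℕ) :
    ofZeroRuns g = (1 / 2 : ℝ) ^ (g 0 + 1) * (1 + ofZeroRuns fun n => g (n + 1)) := by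
  rw [ofZeroRuns, (summable_ofZeroRuns g).tsum_eq_zero_add, ofZeroRuns, mul_add, mul_one,
    ← tsum_mul_left]
  congr 1
  · simp [add_comm]
  · refine tsum_congr fun n => ?_
    rw [Finset.sum_range_succ', ← pow_add]
    congr 1
    ring

theorem ofZeroRuns_mem_Ioc_pow (g : ℕ → ℕ) :
    ofZeroRuns g ∈ Ioc ((1 / 2 : ℝ) ^ (g 0 + 1)) ((1 / 2) ^ g 0) := by
  obtain ⟨hpos, hle⟩ := ofZeroRuns_mem_Ioc fun n => g (n + 1)
  have hpow : (0 : ℝ) < (1 / 2) ^ (g 0 + 1) := by positivity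
  rw [ofZeroRuns_eq]
  constructor
  · nlinarith
  · rw [pow_succ] at hpow ⊢
    nlinarith

theorem head_eq_of_ofZeroRuns_eq {g g' : ℕ → ℕ} (h : ofZeroRuns g = ofZeroRuns g') :
    g 0 = g' 0 :=
  eq_of_mem_Ioc_pow (y := 1 / 2) (by norm_num) (by norm_num) (h ▸ ofZeroRuns_mem_Ioc_pow g)
    (ofZeroRuns_mem_Ioc_pow g')

theorem ofZeroRuns_injective : Injective ofZeroRuns := by
  intro g g' h
  funext n
  induction n generalizing g g' with
  | zero => exact head_eq_of_ofZeroRuns_eq h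
  | succ n ih =>
    have h₀ := head_eq_of_ofZeroRuns_eq h
    rw [ofZeroRuns_eq g, ofZeroRuns_eq g', h₀] at h
    exact ih (add_left_cancel (mul_left_cancel₀ (by positivity) h))

theorem abs_ofZeroRuns_sub_le {g : ℕ → ℕ} {x : ℕ → ℝ} (hx : ∀ n, x n ∈ Ioc 0 1)
    (hrec : ∀ n, x n = (1 / 2 : ℝ) ^ (g n + 1) * (1 + x (n + 1))) (N : ℕ) :
    |ofZeroRuns g - x 0| ≤ (1 / 2) ^ N := by
  induction N generalizing g x with
  | zero =>
    obtain ⟨hg₀, hg₁⟩ := ofZeroRuns_mem_Ioc g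
    obtain ⟨hx₀, hx₁⟩ := hx 0
    rw [pow_zero, abs_le]
    constructor <;> linarith
  | succ N ih =>
    have htail := ih (g := fun n => g (n + 1)) (x := fun n => x (n + 1)) (fun n => hx _)
      (fun n => hrec _)
    rw [ofZeroRuns_eq, hrec 0, ← mul_sub, abs_mul, add_sub_add_left_eq_sub,
      abs_of_pos (by positivity)]
    calc (1 / 2 : ℝ) ^ (g 0 + 1) * |ofZeroRuns (fun n => g (n + 1)) - x 1|
        ≤ (1 / 2) ^ 1 * (1 / 2) ^ N :=
          mul_le_mul (pow_le_pow_of_le_one (by norm_num) (by norm_num) (by omega)) htail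
            (abs_nonneg _) (by positivity)
      _ = (1 / 2) ^ (N + 1) := by ring

theorem ofZeroRuns_eq_of_forall {g : ℕ → ℕ} {x : ℕ → ℝ} (hx : ∀ n, x n ∈ Ioc 0 1)
    (hrec : ∀ n, x n = (1 / 2 : ℝ) ^ (g n + 1) * (1 + x (n + 1))) : ofZeroRuns g = x 0 := by
  have hlim : Tendsto (fun N : ℕ => (1 / 2 : ℝ) ^ N) atTop (𝓝 0) :=
    tendsto_pow_atTop_nhds_zero_of_lt_one (by norm_num) (by norm_num)
  exact sub_eq_zero.1 (abs_nonpos_iff.1 (ge_of_tendsto' hlim (abs_ofZeroRuns_sub_le hx hrec)))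

theorem range_ofZeroRuns : range ofZeroRuns = Ioc 0 1 := by
  refine (range_subset_iff.2 ofZeroRuns_mem_Ioc).antisymm fun t ht => ?_
  have hlead (s : ℝ) : ∃ k : ℕ, s ∈ Ioc 0 1 → (1 / 2 : ℝ) ^ (k + 1) < s ∧ s ≤ (1 / 2) ^ k := by
    by_cases hs : s ∈ Ioc 0 1
    · obtain ⟨k, hk⟩ := exists_nat_pow_near_of_lt_one hs.1 hs.2 (by norm_num : (0 : ℝ) < 1 / 2) (by norm_num)
      exact ⟨k, fun _ => hk⟩
    · exact ⟨0, fun h => absurd h hs⟩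
  choose k hk using hlead
  -- `T` shifts the binary expansion of `s` past its first one.
  set T : ℝ → ℝ := fun s => s / (1 / 2) ^ (k s + 1) - 1
  have hT : MapsTo T (Ioc 0 1) (Ioc 0 1) := by
    intro s hs
    obtain ⟨hlow, hup⟩ := hk s hs
    have hpow : (0 : ℝ) < (1 / 2) ^ (k s + 1) := by positivity
    constructor
    · rw [sub_pos, one_lt_div hpow]
      exact hlow
    · rw [sub_le_iff_le_add, div_le_iff₀ hpow, pow_succ]
      linarith
  have hTrec (s : ℝ) : s = (1 / 2 : ℝ) ^ (k s + 1) * (1 + T s) := by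
    simp only [T]
    field_simp
    ring
  refine ⟨fun n => k (T^[n] t), ofZeroRuns_eq_of_forall (x := fun n => T^[n] t)
    (fun n => hT.iterate n ht) fun n => ?_⟩
  simp only [iterate_succ_apply']
  exact hTrec _

@[fun_prop]
theorem continuous_ofZeroRuns : Continuous ofZeroRuns := by
  refine continuous_tsum (fun n => ?_) ((summable_nat_add_iff 1).2 summable_geometric_two)
    fun n g => ?_
  · have hsum : Continuous fun g : ℕ → ℕ => ∑ i ∈ Finset.range (n + 1), g i :=
      continuous_finsetSum _ fun i _ => continuous_apply i
    exact (continuous_of_discreteTopology (f := fun m : ℕ => (1 / 2 : ℝ) ^ (n + 1 + m))).comp hsum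
  · rw [Real.norm_of_nonneg (by positivity)]
    exact ofZeroRuns_term_le g n

theorem real_line_partition_into_continuum_cantor_sets :
    ∃ P : Set (Set ℝ), Cardinal.mk P = Cardinal.continuum ∧
      (∀ A ∈ P, IsCantorSet A) ∧ P.PairwiseDisjoint id ∧ ⋃₀ P = Set.univ := by
  let e : (ℤ × (ℕ → ℕ)) × (ℕ → Bool) ≃ ℤ × (ℕ → ℕ) :=
    (Equiv.prodAssoc _ _ _).trans <| (Equiv.refl ℤ).prodCongr <|
      ((Equiv.prodComm _ _).trans (Equiv.arrowProdEquivProdArrow ℕ _ _).symm).trans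
        (Equiv.piCongrRight fun _ => Equiv.boolProdNatEquivNat)
  have hΦ : Bijective fun p : (ℤ × (ℕ → ℕ)) × (ℕ → Bool) =>
      (p.1.1 : ℝ) - ofZeroRuns fun k => Nat.bit (p.2 k) (p.1.2 k) :=
    (bijective_intCast_sub ofZeroRuns_injective range_ofZeroRuns).comp e.bijective
  obtain ⟨P, hcard, hfibers, hdisj, hcover⟩ := exists_partition_of_bijective hΦ
  refine ⟨P, ?_, fun A hA => ?_, hdisj, hcover⟩
  · simpa [Cardinal.aleph0_power_aleph0] using hcard
  · obtain ⟨⟨n, y⟩, rfl⟩ := hfibers A hA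
    exact isCantorSet_range (by dsimp only; fun_prop) (hΦ.1.comp (Prod.mk_right_injective _))
end

section
/- If S ⊆ ℝ is totally disconnected, C ⊆ ℝ is a Cantor set, s ∈ S, and a ∈ C is a two-sided accumulation point of C (i.e., for every ε > 0 both C ∩ (a, a+ε) and C ∩ (a−ε, a) are nonempty), then there exists a strictly increasing function f : ℝ → C with f(s) = a such that the restriction of f to S is a homeomorphism from S onto the subspace f(S) of C. -/
/-- `a` is a two-sided accumulation point of `C`. -/
def TwoSidedAcc (C : Set ℝ) (a : ℝ) : Prop :=
  ∀ ε > (0 : ℝ), (C ∩ Set.Ioo a (a + ε)).Nonempty ∧ (C ∩ Set.Ioo (a - ε) a).Nonempty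

open Set Filter Topology Metric

theorem StrictMono.comap_nhds_le {α β : Type*} [LinearOrder α] [TopologicalSpace α]
    [OrderTopology α] [NoMaxOrder α] [NoMinOrder α] [LinearOrder β] [TopologicalSpace β]
    [OrderTopology β] {f : α → β} (hf : StrictMono f) (x : α) :
    comap f (𝓝 (f x)) ≤ 𝓝 x :=
  (nhds_basis_Ioo x).ge_iff.2 fun p hp => mem_comap.2
    ⟨Ioo (f p.1) (f p.2), Ioo_mem_nhds (hf hp.1) (hf hp.2),
      fun _ hy => ⟨hf.lt_iff_lt.1 hy.1, hf.lt_iff_lt.1 hy.2⟩⟩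

theorem StrictMono.isEmbedding_domRestrict {α β : Type*} [LinearOrder α] [TopologicalSpace α]
    [OrderTopology α] [NoMaxOrder α] [NoMinOrder α] [LinearOrder β] [TopologicalSpace β]
    [OrderTopology β] {f : α → β} (hf : StrictMono f) {S : Set α}
    (hS : ∀ x ∈ S, ContinuousAt f x) : IsEmbedding (S.domRestrict f) := by
  refine ⟨isInducing_iff_nhds.2 fun x => le_antisymm ?_ ?_,
    hf.injective.comp Subtype.val_injective⟩
  · exact ((hS x x.2).comp continuousAt_subtype_val).le_comap
  · rw [nhds_subtype, domRestrict_eq, ← comap_comap]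
    exact comap_mono (hf.comap_nhds_le x)

theorem IsTotallyDisconnected.interior_eq_empty {S : Set ℝ} (hS : IsTotallyDisconnected S) :
    interior S = ∅ := by
  refine eq_empty_iff_forall_notMem.2 fun x hx => ?_
  obtain ⟨ε, hε, hball⟩ := Metric.mem_nhds_iff.1 (mem_interior_iff_mem_nhds.1 hx)
  have := hS _ hball (convex_ball x ε).isPreconnected
  have hmem : x + ε / 2 ∈ ball x ε := by
    rw [Real.ball_eq_Ioo]; constructor <;> linarith
  linarith [this (mem_ball_self hε) hmem]

theorem IsTotallyDisconnected.exists_denseRange_forall_notMem {S : Set ℝ}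
    (hS : IsTotallyDisconnected S) : ∃ d : ℕ → ℝ, DenseRange d ∧ ∀ n, d n ∉ S := by
  have hdense : Dense Sᶜ := interior_eq_empty_iff_dense_compl.1 hS.interior_eq_empty
  have : Nonempty ↥Sᶜ := hdense.nonempty.to_subtype
  obtain ⟨u, hu⟩ := TopologicalSpace.exists_dense_seq ↥Sᶜ
  exact ⟨fun n => u n, hdense.denseRange_val.comp hu continuous_subtype_val, fun n => (u n).2⟩

theorem TwoSidedAcc.mono {P Q : Set ℝ} {a r : ℝ} (h : TwoSidedAcc P a) (hr : 0 < r)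
    (hPQ : P ∩ Ioo (a - r) (a + r) ⊆ Q) : TwoSidedAcc Q a := by
  intro ε hε
  have hεr : min ε r ≤ ε := min_le_left ε r
  have hrε : min ε r ≤ r := min_le_right ε r
  obtain ⟨⟨u, huP, hu⟩, ⟨v, hvP, hv⟩⟩ := h (min ε r) (lt_min hε hr)
  exact ⟨⟨u, hPQ ⟨huP, by constructor <;> linarith [hu.1, hu.2]⟩, hu.1, by linarith [hu.2]⟩,
    ⟨v, hPQ ⟨hvP, by constructor <;> linarith [hv.1, hv.2]⟩, by linarith [hv.1], hv.2⟩⟩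

theorem TwoSidedAcc.mem {P : Set ℝ} {a : ℝ} (h : TwoSidedAcc P a) (hP : IsClosed P) : a ∈ P :=
  hP.closure_subset <| Metric.mem_closure_iff.2 fun ε hε => by
    obtain ⟨⟨u, huP, hu⟩, -⟩ := h ε hε
    exact ⟨u, huP, by rw [Real.dist_eq, abs_sub_comm, abs_of_pos] <;> linarith [hu.1, hu.2]⟩

structure IsSplit (a : ℝ) (c : Bool) (δ : ℝ) (P : Set ℝ) (Q : Bool → Set ℝ) : Prop where
  perfect : ∀ b, Perfect (Q b)
  nonempty : ∀ b, (Q b).Nonempty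
  subset : ∀ b, Q b ⊆ P
  dist_le : ∀ b, ∀ u ∈ Q b, ∀ v ∈ Q b, dist u v ≤ δ
  lt : ∀ u ∈ Q false, ∀ v ∈ Q true, u < v
  twoSidedAcc : TwoSidedAcc P a → TwoSidedAcc (Q c) a

theorem Perfect.exists_lt {α : Type*} [TopologicalSpace α] [LinearOrder α] {P : Set α}
    (hP : Perfect P) (hne : P.Nonempty) : ∃ x ∈ P, ∃ y ∈ P, x < y := by
  obtain ⟨x, hx⟩ := hne
  obtain ⟨y, ⟨-, hy⟩, hyx⟩ := preperfect_iff_nhds.1 hP.acc x hx univ univ_mem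
  rcases hyx.lt_or_gt with h | h
  exacts [⟨y, hy, x, hx, h⟩, ⟨x, hx, y, hy, h⟩]

theorem Perfect.exists_split_centers (a : ℝ) (c : Bool) {P : Set ℝ} (hP : Perfect P)
    (hne : P.Nonempty) :
    ∃ p : Bool → ℝ, (∀ b, p b ∈ P) ∧ p false < p true ∧ (TwoSidedAcc P a → p c = a) := by
  by_cases h : TwoSidedAcc P a
  · have haP := h.mem hP.closed
    obtain ⟨⟨y, hyP, hy⟩, ⟨x, hxP, hx⟩⟩ := h 1 one_pos
    cases c
    · exact ⟨fun b => cond b y a, Bool.rec haP hyP, hy.1, fun _ => rfl⟩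
    · exact ⟨fun b => cond b a x, Bool.rec hxP haP, hx.2, fun _ => rfl⟩
  · obtain ⟨x, hx, y, hy, hxy⟩ := hP.exists_lt hne
    exact ⟨fun b => cond b y x, Bool.rec hx hy, hxy, fun h' => absurd h' h⟩

theorem Perfect.exists_isSplit (a : ℝ) (c : Bool) {δ : ℝ} (hδ : 0 < δ) {P : Set ℝ}
    (hP : Perfect P) (hne : P.Nonempty) : ∃ Q, IsSplit a c δ P Q := by
  obtain ⟨p, hpP, hp, hpa⟩ := hP.exists_split_centers a c hne
  set r := min (δ / 2) ((p true - p false) / 3)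
  have hr : 0 < r := lt_min (by linarith) (by linarith)
  have hrδ : r ≤ δ / 2 := min_le_left _ _
  have hrp : r ≤ (p true - p false) / 3 := min_le_right _ _
  have hQ : ∀ b, closure (ball (p b) r ∩ P) ⊆ Icc (p b - r) (p b + r) := fun b =>
    closure_minimal (inter_subset_left.trans (Real.ball_eq_Ioo _ _ ▸ Ioo_subset_Icc_self))
      isClosed_Icc
  refine ⟨fun b => closure (ball (p b) r ∩ P),
    ⟨fun b => (hP.closure_nhds_inter _ (hpP b) (mem_ball_self hr) isOpen_ball).1,
    fun b => (hP.closure_nhds_inter _ (hpP b) (mem_ball_self hr) isOpen_ball).2,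
    fun b => closure_minimal inter_subset_right hP.closed, fun b u hu v hv => ?_,
    fun u hu v hv => ?_, fun h => ?_⟩⟩
  · obtain ⟨hu₁, hu₂⟩ := hQ b hu
    obtain ⟨hv₁, hv₂⟩ := hQ b hv
    rw [Real.dist_eq, abs_le]
    constructor <;> linarith
  · linarith [(hQ false hu).2, (hQ true hv).1]
  · refine h.mono hr fun u hu => subset_closure ⟨?_, hu.1⟩
    rw [hpa h, Real.ball_eq_Ioo]
    exact hu.2

namespace CantorTree

variable (C : Set ℝ) (a : ℝ)

noncomputable def split (c : Bool) (δ : ℝ) (P : Set ℝ) : Bool → Set ℝ :=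
  Classical.epsilon (IsSplit a c δ P)

/-- The piece at depth `n` along the address `σ`; the splittings keep `a` along the address `τ`. -/
noncomputable def node (τ σ : ℕ → Bool) : ℕ → Set ℝ
  | 0 => C
  | n + 1 => split a (τ n) ((1 / 2) ^ n) (node τ σ n) (σ n)

/-- The intersection of the pieces along `σ` is a single point; `sSup` picks it. -/
noncomputable def point (τ σ : ℕ → Bool) : ℝ :=
  sSup (⋂ n, node C a τ σ n)

variable {C a} {τ σ σ' : ℕ → Bool}

theorem isSplit_split {c : Bool} {δ : ℝ} (hδ : 0 < δ) {P : Set ℝ} (hP : Perfect P)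
    (hne : P.Nonempty) : IsSplit a c δ P (split a c δ P) :=
  Classical.epsilon_spec (hP.exists_isSplit a c hδ hne)

theorem perfect_node (hC : Perfect C) (hne : C.Nonempty) (n : ℕ) :
    Perfect (node C a τ σ n) ∧ (node C a τ σ n).Nonempty := by
  induction n with
  | zero => exact ⟨hC, hne⟩
  | succ n ih =>
    have h := isSplit_split (a := a) (c := τ n) (pow_pos one_half_pos n) ih.1 ih.2
    exact ⟨h.perfect _, h.nonempty _⟩

theorem isSplit_node (hC : Perfect C) (hne : C.Nonempty) (n : ℕ) :
    IsSplit a (τ n) ((1 / 2) ^ n) (node C a τ σ n)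
      (split a (τ n) ((1 / 2) ^ n) (node C a τ σ n)) :=
  isSplit_split (pow_pos one_half_pos n) (perfect_node hC hne n).1 (perfect_node hC hne n).2

theorem node_congr {n : ℕ} (h : ∀ k < n, σ k = σ' k) : node C a τ σ n = node C a τ σ' n := by
  induction n with
  | zero => rfl
  | succ n ih =>
    simp only [node, ih fun k hk => h k (by omega), h n n.lt_succ_self]

theorem twoSidedAcc_node (hC : Perfect C) (hne : C.Nonempty) (ha : TwoSidedAcc C a) (n : ℕ) :
    TwoSidedAcc (node C a τ τ n) a := by
  induction n with
  | zero => exact ha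
  | succ n ih => exact (isSplit_node hC hne n).twoSidedAcc ih

theorem point_mem_node (hC : Perfect C) (hne : C.Nonempty) (hCc : IsCompact C) (n : ℕ) :
    point C a τ σ ∈ node C a τ σ n := by
  have hcl : ∀ n, IsClosed (node C a τ σ n) := fun n => (perfect_node hC hne n).1.closed
  have hne' : (⋂ n, node C a τ σ n).Nonempty :=
    IsCompact.nonempty_iInter_of_sequence_nonempty_isCompact_isClosed _
      (fun n => (isSplit_node hC hne n).subset _) (fun n => (perfect_node hC hne n).2) hCc hcl
  have hcpt : IsCompact (⋂ n, node C a τ σ n) :=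
    hCc.of_isClosed_subset (isClosed_iInter hcl) (iInter_subset _ 0)
  exact mem_iInter.1 (hcpt.sSup_mem hne') n

theorem dist_point_le (hC : Perfect C) (hne : C.Nonempty) (hCc : IsCompact C) {n : ℕ}
    (h : ∀ k < n + 1, σ k = σ' k) : dist (point C a τ σ) (point C a τ σ') ≤ (1 / 2) ^ n := by
  have hσ' := point_mem_node (σ := σ') hC hne hCc (a := a) (τ := τ) (n + 1)
  rw [← node_congr h] at hσ'
  exact (isSplit_node hC hne n).dist_le _ _ (point_mem_node hC hne hCc (n + 1)) _ hσ'

theorem point_lt (hC : Perfect C) (hne : C.Nonempty) (hCc : IsCompact C) {n : ℕ}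
    (h : ∀ k < n, σ k = σ' k) (hσ : σ n = false) (hσ' : σ' n = true) :
    point C a τ σ < point C a τ σ' := by
  have hu := point_mem_node (σ := σ) hC hne hCc (a := a) (τ := τ) (n + 1)
  have hv := point_mem_node (σ := σ') hC hne hCc (a := a) (τ := τ) (n + 1)
  rw [node, hσ] at hu
  rw [node, hσ', ← node_congr h] at hv
  exact (isSplit_node hC hne n).lt _ hu _ hv

theorem point_self (hC : Perfect C) (hne : C.Nonempty) (hCc : IsCompact C)
    (ha : TwoSidedAcc C a) : point C a τ τ = a := by
  refine eq_of_forall_dist_le fun ε hε => ?_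
  obtain ⟨n, hn⟩ := exists_pow_lt_of_lt_one hε (by norm_num : (1 / 2 : ℝ) < 1)
  have hmem := (twoSidedAcc_node (τ := τ) hC hne ha (n + 1)).mem (perfect_node hC hne _).1.closed
  exact ((isSplit_node hC hne n).dist_le _ _ (point_mem_node hC hne hCc (n + 1)) _ hmem).trans
    hn.le

noncomputable def digits (d : ℕ → ℝ) (x : ℝ) (k : ℕ) : Bool :=
  decide (d k < x)

variable (C a) in
noncomputable def embed (d : ℕ → ℝ) (s x : ℝ) : ℝ :=
  point C a (digits d s) (digits d x)

variable {d : ℕ → ℝ} {s : ℝ}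

theorem embed_mem (hC : Perfect C) (hne : C.Nonempty) (hCc : IsCompact C) (x : ℝ) :
    embed C a d s x ∈ C :=
  point_mem_node hC hne hCc 0

theorem embed_self (hC : Perfect C) (hne : C.Nonempty) (hCc : IsCompact C)
    (ha : TwoSidedAcc C a) : embed C a d s s = a :=
  point_self hC hne hCc ha

/-- Two points are separated by the first `d n` between them, at which their addresses part. -/
theorem strictMono_embed (hC : Perfect C) (hne : C.Nonempty) (hCc : IsCompact C)
    (hd : DenseRange d) : StrictMono (embed C a d s) := by
  classical
  intro x y hxy
  have hex : ∃ n, d n ∈ Ico x y := by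
    obtain ⟨n, hn⟩ := hd.exists_mem_open isOpen_Ioo (nonempty_Ioo.2 hxy)
    exact ⟨n, Ioo_subset_Ico_self hn⟩
  obtain ⟨hx, hy⟩ := Nat.find_spec hex
  refine point_lt hC hne hCc (n := Nat.find hex) (fun k hk => ?_) ?_ ?_
  · have hk' : d k ∉ Ico x y := Nat.find_min hex hk
    simp only [digits, decide_eq_decide]
    constructor
    · exact fun h => h.trans hxy
    · exact fun h => not_le.1 fun hxk => hk' ⟨hxk, h⟩
  · simpa [digits] using hx
  · simpa [digits] using hy

theorem continuousAt_embed (hC : Perfect C) (hne : C.Nonempty) (hCc : IsCompact C) {t : ℝ}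
    (ht : ∀ n, d n ≠ t) : ContinuousAt (embed C a d s) t := by
  refine Metric.continuousAt_iff'.2 fun ε hε => ?_
  obtain ⟨n, hn⟩ := exists_pow_lt_of_lt_one hε (by norm_num : (1 / 2 : ℝ) < 1)
  have hdigit : ∀ k, ∀ᶠ u in 𝓝 t, digits d u k = digits d t k := fun k => by
    rcases (ht k).lt_or_gt with h | h
    · filter_upwards [eventually_gt_nhds h] with u hu
      simp [digits, hu, h]
    · filter_upwards [eventually_lt_nhds h] with u hu
      simp [digits, hu.not_gt, h.not_gt]
  filter_upwards [(Finset.range (n + 1)).eventually_all.2 fun k _ => hdigit k] with u hu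
  exact (dist_point_le hC hne hCc fun k hk => hu k (Finset.mem_range.2 hk)).trans_lt hn

end CantorTree

theorem exists_strictMono_into_cantor_set_general (S C : Set ℝ) (s a : ℝ)
    (hS : IsTotallyDisconnected S) (hC : IsCantorSet C)
    (hacc : TwoSidedAcc C a) :
    ∃ f : ℝ → ℝ, StrictMono f ∧ (∀ x, f x ∈ C) ∧ f s = a ∧
      ∃ h : ↥S ≃ₜ ↥(f '' S), ∀ x : ↥S, (h x : ℝ) = f x := by
  obtain ⟨hne, hCc, -, hCp⟩ := hC
  obtain ⟨d, hd, hdS⟩ := hS.exists_denseRange_forall_notMem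
  have hf : StrictMono (CantorTree.embed C a d s) := CantorTree.strictMono_embed hCp hne hCc hd
  have hcont : ∀ x ∈ S, ContinuousAt (CantorTree.embed C a d s) x := fun x hx =>
    CantorTree.continuousAt_embed hCp hne hCc fun n h => hdS n (h ▸ hx)
  exact ⟨_, hf, CantorTree.embed_mem hCp hne hCc, CantorTree.embed_self hCp hne hCc hacc,
    (hf.isEmbedding_domRestrict hcont).toHomeomorph.trans (.setCongr (range_domRestrict _ S)),
    fun _ => rfl⟩

theorem exists_strictMono_into_cantor_set (S C : Set ℝ) (s a : ℝ)
    (hS : IsTotallyDisconnected S) (hC : IsCantorSet C) (hs : s ∈ S)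
    (ha : a ∈ C) (hacc : TwoSidedAcc C a) :
    ∃ f : ℝ → ℝ, StrictMono f ∧ (∀ x, f x ∈ C) ∧ f s = a ∧
      ∃ h : ↥S ≃ₜ ↥(f '' S), ∀ x : ↥S, (h x : ℝ) = f x :=
  exists_strictMono_into_cantor_set_general S C s a hS hC hacc
end

section
/- If C₁ and C₂ are Cantor sets in ℝ and aᵢ ∈ Cᵢ is a two-sided accumulation point of Cᵢ for i = 1, 2, then there exists an increasing homeomorphism g : ℝ → ℝ with g(a₁) = a₂ and g(C₁) = C₂. -/
/-!
The bounded gaps of a Cantor set `C`, ordered by position, form a countable dense linear order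
without endpoints, and a two-sided accumulation point `a ∈ C` cuts it into a lower set and its
complement, each again countable, dense and without endpoints. Cantor's back-and-forth theorem
therefore gives an order isomorphism `ψ` from the gaps of `C₁` onto the gaps of `C₂` respecting
the cuts. Sending `x ∈ C₁` to the supremum of the right endpoints of the images of the gaps left
of `x` is then an increasing bijection `C₁ → C₂` that takes each gap's endpoints to those of its
image and `a₁` to `a₂`. Extending it affinely across the gaps and by translations beyond `C₁`
gives a monotone map `ℝ → ℝ` whose inverse is the same construction for `ψ⁻¹`, hence an order
automorphism of `ℝ` and an increasing homeomorphism.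
-/

open Set

@[ext]
structure Gap (C : Set ℝ) where
  left : ℝ
  right : ℝ
  left_mem : left ∈ C
  right_mem : right ∈ C
  left_lt_right : left < right
  notMem_Ioo : ∀ x ∈ C, x ∉ Ioo left right

namespace Gap

variable {C : Set ℝ}

theorem le_left_of_lt_right (G : Gap C) {x : ℝ} (hx : x ∈ C) (h : x < G.right) : x ≤ G.left :=
  not_lt.1 fun h' => G.notMem_Ioo x hx ⟨h', h⟩

theorem right_le_of_left_lt (G : Gap C) {x : ℝ} (hx : x ∈ C) (h : G.left < x) : G.right ≤ x :=
  not_lt.1 fun h' => G.notMem_Ioo x hx ⟨h, h'⟩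

theorem left_injective : Function.Injective (left : Gap C → ℝ) := by
  intro G G' h
  have h₁ := G.right_le_of_left_lt G'.right_mem (h ▸ G'.left_lt_right)
  have h₂ := G'.right_le_of_left_lt G.right_mem (h.symm ▸ G.left_lt_right)
  exact Gap.ext h (le_antisymm h₁ h₂)

noncomputable instance : LinearOrder (Gap C) := LinearOrder.lift' left left_injective

variable {G G' : Gap C}

theorem right_le_left_of_lt (h : G < G') : G.right ≤ G'.left :=
  G.right_le_of_left_lt G'.left_mem h

theorem right_le_left_iff : G.right ≤ G'.left ↔ G < G' :=
  ⟨fun h => G.left_lt_right.trans_le h, right_le_left_of_lt⟩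

theorem right_le_right_iff : G.right ≤ G'.right ↔ G ≤ G' := by
  refine ⟨fun h => not_lt.1 fun h' => ?_, fun h => ?_⟩
  · exact (h.trans_lt ((right_le_left_of_lt h').trans_lt G.left_lt_right)).false
  · rcases h.eq_or_lt with rfl | h
    · exact le_rfl
    · exact (right_le_left_of_lt h).trans G'.left_lt_right.le

instance : Countable (Gap C) := by
  choose q hq using fun G : Gap C => exists_rat_btwn G.left_lt_right
  have not_lt_of_eq : ∀ {G₁ G₂ : Gap C}, q G₁ = q G₂ → ¬ G₁ < G₂ := by
    intro G₁ G₂ h hlt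
    have := right_le_left_of_lt hlt
    linarith [hq G₁, hq G₂, congrArg ((↑) : ℚ → ℝ) h]
  exact Function.Injective.countable fun G G' h =>
    le_antisymm (not_lt.1 (not_lt_of_eq h.symm)) (not_lt.1 (not_lt_of_eq h))

end Gap

noncomputable def floorIn (C : Set ℝ) (x : ℝ) : ℝ := sSup (C ∩ Iic x)

noncomputable def ceilIn (C : Set ℝ) (x : ℝ) : ℝ := sInf (C ∩ Ici x)

section FloorCeil

variable {C : Set ℝ} {x : ℝ}

theorem isGreatest_floorIn (hC : IsClosed C) (h : (C ∩ Iic x).Nonempty) :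
    IsGreatest (C ∩ Iic x) (floorIn C x) :=
  ⟨(hC.inter isClosed_Iic).csSup_mem h ⟨x, fun _ hc => hc.2⟩,
    fun _ hc => le_csSup ⟨x, fun _ hc => hc.2⟩ hc⟩

theorem isLeast_ceilIn (hC : IsClosed C) (h : (C ∩ Ici x).Nonempty) :
    IsLeast (C ∩ Ici x) (ceilIn C x) :=
  ⟨(hC.inter isClosed_Ici).csInf_mem h ⟨x, fun _ hc => hc.2⟩,
    fun _ hc => csInf_le ⟨x, fun _ hc => hc.2⟩ hc⟩

theorem floorIn_of_mem (hx : x ∈ C) : floorIn C x = x :=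
  IsGreatest.csSup_eq ⟨⟨hx, self_mem_Iic⟩, fun _ hc => hc.2⟩

theorem ceilIn_of_mem (hx : x ∈ C) : ceilIn C x = x :=
  IsLeast.csInf_eq ⟨⟨hx, self_mem_Ici⟩, fun _ hc => hc.2⟩

theorem Gap.floorIn_eq (G : Gap C) (hx : x ∈ Ioo G.left G.right) : floorIn C x = G.left :=
  IsGreatest.csSup_eq ⟨⟨G.left_mem, hx.1.le⟩,
    fun _ hc => G.le_left_of_lt_right hc.1 (hc.2.trans_lt hx.2)⟩

theorem Gap.ceilIn_eq (G : Gap C) (hx : x ∈ Ioo G.left G.right) : ceilIn C x = G.right :=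
  IsLeast.csInf_eq ⟨⟨G.right_mem, hx.2.le⟩,
    fun _ hc => G.right_le_of_left_lt hc.1 (hx.1.trans_le hc.2)⟩

theorem exists_gap_mem_of_notMem (hC : IsClosed C) (hx : x ∉ C) (hl : (C ∩ Iic x).Nonempty)
    (hr : (C ∩ Ici x).Nonempty) : ∃ G : Gap C, x ∈ Ioo G.left G.right := by
  obtain ⟨⟨hlC, hlx⟩, hl_max⟩ := isGreatest_floorIn hC hl
  obtain ⟨⟨hrC, hrx⟩, hr_min⟩ := isLeast_ceilIn hC hr
  have hlx' : floorIn C x < x := hlx.lt_of_ne fun h => hx (h ▸ hlC)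
  have hrx' : x < ceilIn C x := hrx.lt_of_ne' fun h => hx (h ▸ hrC)
  refine ⟨⟨floorIn C x, ceilIn C x, hlC, hrC, hlx'.trans hrx', fun c hc hc' => ?_⟩, hlx', hrx'⟩
  rcases le_total c x with hcx | hcx
  · exact (hl_max ⟨hc, hcx⟩).not_gt hc'.1
  · exact (hr_min ⟨hc, hcx⟩).not_gt hc'.2

end FloorCeil

section Gaps

variable {C : Set ℝ}

theorem exists_gap_between (hC : IsClosed C) (htd : IsTotallyDisconnected C) {x y : ℝ}
    (hx : x ∈ C) (hy : y ∈ C) (hxy : x < y) : ∃ G : Gap C, x ≤ G.left ∧ G.right ≤ y := by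
  obtain ⟨z, hzC, hz⟩ := isTotallyDisconnected_iff_lt.1 htd x hx y hy hxy
  obtain ⟨G, hG⟩ := exists_gap_mem_of_notMem hC hzC ⟨x, hx, hz.1.le⟩ ⟨y, hy, hz.2.le⟩
  exact ⟨G, G.le_left_of_lt_right hx (hz.1.trans hG.2),
    G.right_le_of_left_lt hy (hG.1.trans hz.2)⟩

theorem Preperfect.exists_mem_Ioo_left {p q r : ℝ} (hC : Preperfect C) (hp : p ∈ C)
    (hgap : ∀ x ∈ C, x ∉ Ioo p q) (hpq : p < q) (hr : r < p) : ∃ c ∈ C, c ∈ Ioo r p := by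
  obtain ⟨c, ⟨hc, hcC⟩, hcp⟩ := accPt_iff_nhds.1 (hC p hp) _ (Ioo_mem_nhds hr hpq)
  exact ⟨c, hcC, hc.1, (hcp.lt_or_gt.resolve_right fun h => hgap c hcC ⟨h, hc.2⟩)⟩

theorem Preperfect.exists_mem_Ioo_right {p q r : ℝ} (hC : Preperfect C) (hq : q ∈ C)
    (hgap : ∀ x ∈ C, x ∉ Ioo p q) (hpq : p < q) (hr : q < r) : ∃ c ∈ C, c ∈ Ioo q r := by
  obtain ⟨c, ⟨hc, hcC⟩, hcq⟩ := accPt_iff_nhds.1 (hC q hq) _ (Ioo_mem_nhds hpq hr)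
  exact ⟨c, hcC, (hcq.lt_or_gt.resolve_left fun h => hgap c hcC ⟨hc.1, h⟩), hc.2⟩

theorem Gap.exists_mem_lt_left (hC : Preperfect C) (G : Gap C) : ∃ c ∈ C, c < G.left :=
  let ⟨c, hc, hc'⟩ := hC.exists_mem_Ioo_left G.left_mem G.notMem_Ioo G.left_lt_right
    (sub_one_lt G.left)
  ⟨c, hc, hc'.2⟩

theorem Gap.exists_mem_gt_right (hC : Preperfect C) (G : Gap C) : ∃ c ∈ C, G.right < c :=
  let ⟨c, hc, hc'⟩ := hC.exists_mem_Ioo_right G.right_mem G.notMem_Ioo G.left_lt_right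
    (lt_add_one G.right)
  ⟨c, hc, hc'.1⟩

theorem Gap.right_lt_left_of_lt (hC : Preperfect C) {G G' : Gap C} (h : G < G') :
    G.right < G'.left := by
  refine (right_le_left_of_lt h).lt_of_ne fun heq => ?_
  obtain ⟨c, hc, hc'⟩ := hC.exists_mem_Ioo_left G'.left_mem G'.notMem_Ioo G'.left_lt_right
    (heq ▸ G.left_lt_right)
  exact G.notMem_Ioo c hc (heq ▸ hc')

theorem TwoSidedAcc.exists_mem_lt {a : ℝ} (h : TwoSidedAcc C a) : ∃ c ∈ C, c < a :=
  let ⟨c, hc, hc'⟩ := (h 1 one_pos).2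
  ⟨c, hc, hc'.2⟩

theorem TwoSidedAcc.exists_mem_gt {a : ℝ} (h : TwoSidedAcc C a) : ∃ c ∈ C, a < c :=
  let ⟨c, hc, hc'⟩ := (h 1 one_pos).1
  ⟨c, hc, hc'.1⟩

theorem TwoSidedAcc.gap_right_ne {a : ℝ} (h : TwoSidedAcc C a) (G : Gap C) : G.right ≠ a := by
  rintro rfl
  obtain ⟨c, hc, hc'⟩ := (h _ (sub_pos.2 G.left_lt_right)).2
  exact G.notMem_Ioo c hc ⟨by linarith [hc'.1], hc'.2⟩

theorem TwoSidedAcc.gap_left_ne {a : ℝ} (h : TwoSidedAcc C a) (G : Gap C) : G.left ≠ a := by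
  rintro rfl
  obtain ⟨c, hc, hc'⟩ := (h _ (sub_pos.2 G.left_lt_right)).1
  exact G.notMem_Ioo c hc ⟨hc'.1, by linarith [hc'.2]⟩

end Gaps

theorem OrderIso.exists_of_isLowerSet {α β : Type*} [LinearOrder α] [LinearOrder β]
    {s : Set α} {t : Set β} (hs : IsLowerSet s) (ht : IsLowerSet t) (e : s ≃o t)
    (f : ↥sᶜ ≃o ↥tᶜ) : ∃ ψ : α ≃o β, ψ '' s = t := by
  classical
  let φ : α → β := fun x => if h : x ∈ s then e ⟨x, h⟩ else f ⟨x, h⟩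
  have φ_of_mem : ∀ x (h : x ∈ s), φ x = e ⟨x, h⟩ := fun x h => dif_pos h
  have φ_of_notMem : ∀ x (h : x ∉ s), φ x = f ⟨x, h⟩ := fun x h => dif_neg h
  have φ_mem : ∀ x, φ x ∈ t ↔ x ∈ s := by
    intro x
    by_cases h : x ∈ s
    · simp only [φ_of_mem x h, h, (e _).2]
    · simp only [φ_of_notMem x h, h, iff_false]
      exact (f _).2
  have φ_strictMono : StrictMono φ := by
    intro x y hxy
    by_cases hy : y ∈ s
    · rw [φ_of_mem x (hs hxy.le hy), φ_of_mem y hy]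
      exact e.strictMono hxy
    by_cases hx : x ∈ s
    · exact lt_of_not_ge fun h => (φ_mem y).not.2 hy (ht h ((φ_mem x).2 hx))
    · rw [φ_of_notMem x hx, φ_of_notMem y hy]
      exact f.strictMono hxy
  have φ_surjective : Function.Surjective φ := by
    intro y
    by_cases hy : y ∈ t
    · exact ⟨e.symm ⟨y, hy⟩, by rw [φ_of_mem _ (e.symm _).2]; simp⟩
    · exact ⟨f.symm ⟨y, hy⟩, by rw [φ_of_notMem _ (f.symm _).2]; simp⟩
  let ψ := φ_strictMono.orderIsoOfSurjective φ φ_surjective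
  refine ⟨ψ, Set.ext fun y => ?_⟩
  rw [ψ.image_eq_preimage_symm, mem_preimage, ← φ_mem]
  exact iff_of_eq (congrArg (· ∈ t) (ψ.apply_symm_apply y))

def leftGaps (C : Set ℝ) (x : ℝ) : Set (Gap C) := {G | G.right ≤ x}

section LeftGaps

variable {C : Set ℝ}

theorem isLowerSet_leftGaps (x : ℝ) : IsLowerSet (leftGaps C x) :=
  fun _ _ h hG => (Gap.right_le_right_iff.2 h).trans hG

theorem Gap.denselyOrdered (htd : IsTotallyDisconnected C) (hperf : Perfect C) :
    DenselyOrdered (Gap C) := by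
  refine ⟨fun G G' h => ?_⟩
  obtain ⟨G'', h₁, h₂⟩ := exists_gap_between hperf.closed htd G.right_mem G'.left_mem
    (Gap.right_lt_left_of_lt hperf.acc h)
  exact ⟨G'', Gap.right_le_left_iff.1 h₁, Gap.right_le_left_iff.1 h₂⟩

theorem nonempty_leftGaps_orderIso_rat (htd : IsTotallyDisconnected C) (hperf : Perfect C)
    {a : ℝ} (ha : a ∈ C) (hacc : TwoSidedAcc C a) : Nonempty (leftGaps C a ≃o ℚ) := by
  have := Gap.denselyOrdered htd hperf
  have := (isLowerSet_leftGaps (C := C) a).ordConnected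
  have : Nonempty (leftGaps C a) := by
    obtain ⟨c, hc, hca⟩ := hacc.exists_mem_lt
    obtain ⟨G, -, hG⟩ := exists_gap_between hperf.closed htd hc ha hca
    exact ⟨⟨G, hG⟩⟩
  have : NoMaxOrder (leftGaps C a) := by
    refine ⟨fun ⟨G, hG⟩ => ?_⟩
    obtain ⟨G', h₁, h₂⟩ := exists_gap_between hperf.closed htd G.right_mem ha
      (lt_of_le_of_ne hG (hacc.gap_right_ne G))
    exact ⟨⟨G', h₂⟩, Gap.right_le_left_iff.1 h₁⟩
  have : NoMinOrder (leftGaps C a) := by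
    refine ⟨fun ⟨G, hG⟩ => ?_⟩
    obtain ⟨c, hc, hcG⟩ := G.exists_mem_lt_left hperf.acc
    obtain ⟨G', -, h₂⟩ := exists_gap_between hperf.closed htd hc G.left_mem hcG
    have hlt : G' < G := Gap.right_le_left_iff.1 h₂
    exact ⟨⟨G', isLowerSet_leftGaps a hlt.le hG⟩, hlt⟩
  exact Order.iso_of_countable_dense _ _

theorem nonempty_compl_leftGaps_orderIso_rat (htd : IsTotallyDisconnected C)
    (hperf : Perfect C) {a : ℝ} (ha : a ∈ C) (hacc : TwoSidedAcc C a) :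
    Nonempty (↥(leftGaps C a)ᶜ ≃o ℚ) := by
  have := Gap.denselyOrdered htd hperf
  have := (isLowerSet_leftGaps (C := C) a).compl.ordConnected
  have mem_compl : ∀ {G : Gap C}, G ∈ (leftGaps C a)ᶜ ↔ a < G.left := fun {G} =>
    ⟨fun h => (G.le_left_of_lt_right ha (not_le.1 h)).lt_of_ne' (hacc.gap_left_ne G),
      fun h => not_le.2 (h.trans G.left_lt_right)⟩
  have : Nonempty ↥(leftGaps C a)ᶜ := by
    obtain ⟨c, hc, hac⟩ := hacc.exists_mem_gt
    obtain ⟨G, hG, -⟩ := exists_gap_between hperf.closed htd ha hc hac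
    exact ⟨⟨G, mem_compl.2 (hG.lt_of_ne' (hacc.gap_left_ne G))⟩⟩
  have : NoMinOrder ↥(leftGaps C a)ᶜ := by
    refine ⟨fun ⟨G, hG⟩ => ?_⟩
    obtain ⟨G', h₁, h₂⟩ := exists_gap_between hperf.closed htd ha G.left_mem (mem_compl.1 hG)
    exact ⟨⟨G', mem_compl.2 (h₁.lt_of_ne' (hacc.gap_left_ne G'))⟩, Gap.right_le_left_iff.1 h₂⟩
  have : NoMaxOrder ↥(leftGaps C a)ᶜ := by
    refine ⟨fun ⟨G, hG⟩ => ?_⟩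
    obtain ⟨c, hc, hGc⟩ := G.exists_mem_gt_right hperf.acc
    obtain ⟨G', h₁, -⟩ := exists_gap_between hperf.closed htd G.right_mem hc hGc
    have hlt : G < G' := Gap.right_le_left_iff.1 h₁
    exact ⟨⟨G', (isLowerSet_leftGaps a).compl hlt.le hG⟩, hlt⟩
  exact Order.iso_of_countable_dense _ _

end LeftGaps

theorem exists_gap_orderIso {C₁ C₂ : Set ℝ} {a₁ a₂ : ℝ} (htd₁ : IsTotallyDisconnected C₁)
    (hperf₁ : Perfect C₁) (htd₂ : IsTotallyDisconnected C₂) (hperf₂ : Perfect C₂)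
    (ha₁ : a₁ ∈ C₁) (ha₂ : a₂ ∈ C₂) (hacc₁ : TwoSidedAcc C₁ a₁) (hacc₂ : TwoSidedAcc C₂ a₂) :
    ∃ ψ : Gap C₁ ≃o Gap C₂, ψ '' leftGaps C₁ a₁ = leftGaps C₂ a₂ := by
  obtain ⟨e₁⟩ := nonempty_leftGaps_orderIso_rat htd₁ hperf₁ ha₁ hacc₁
  obtain ⟨e₂⟩ := nonempty_leftGaps_orderIso_rat htd₂ hperf₂ ha₂ hacc₂
  obtain ⟨f₁⟩ := nonempty_compl_leftGaps_orderIso_rat htd₁ hperf₁ ha₁ hacc₁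
  obtain ⟨f₂⟩ := nonempty_compl_leftGaps_orderIso_rat htd₂ hperf₂ ha₂ hacc₂
  exact OrderIso.exists_of_isLowerSet (isLowerSet_leftGaps a₁) (isLowerSet_leftGaps a₂)
    (e₁.trans e₂.symm) (f₁.trans f₂.symm)

/-- Inserting `sInf C` keeps the supremum in `C` when `S` is empty. -/
noncomputable def supRight (C : Set ℝ) (S : Set (Gap C)) : ℝ :=
  sSup (insert (sInf C) (Gap.right '' S))

section SupRight

variable {C : Set ℝ}

theorem insert_sInf_image_right_subset (hne : C.Nonempty) (hC : IsCompact C) (S : Set (Gap C)) :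
    insert (sInf C) (Gap.right '' S) ⊆ C :=
  insert_subset (hC.sInf_mem hne) (image_subset_iff.2 fun G _ => G.right_mem)

theorem bddAbove_insert_sInf_image_right (hne : C.Nonempty) (hC : IsCompact C)
    (S : Set (Gap C)) : BddAbove (insert (sInf C) (Gap.right '' S)) :=
  hC.bddAbove.mono (insert_sInf_image_right_subset hne hC S)

theorem supRight_mem (hne : C.Nonempty) (hC : IsCompact C) (S : Set (Gap C)) :
    supRight C S ∈ C :=
  hC.isClosed.closure_subset_iff.2 (insert_sInf_image_right_subset hne hC S)
    (csSup_mem_closure (insert_nonempty _ _) (bddAbove_insert_sInf_image_right hne hC S))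

theorem le_supRight (hne : C.Nonempty) (hC : IsCompact C) {S : Set (Gap C)} {G : Gap C}
    (hG : G ∈ S) : G.right ≤ supRight C S :=
  le_csSup (bddAbove_insert_sInf_image_right hne hC S)
    (mem_insert_of_mem _ (mem_image_of_mem _ hG))

theorem supRight_mono (hne : C.Nonempty) (hC : IsCompact C) {S T : Set (Gap C)} (h : S ⊆ T) :
    supRight C S ≤ supRight C T :=
  csSup_le_csSup (bddAbove_insert_sInf_image_right hne hC T) (insert_nonempty _ _)
    (insert_subset_insert (image_mono h))

theorem supRight_leftGaps (hC : IsCompact C) (htd : IsTotallyDisconnected C) {y : ℝ}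
    (hy : y ∈ C) : supRight C (leftGaps C y) = y := by
  have hne : C.Nonempty := ⟨y, hy⟩
  have hle : supRight C (leftGaps C y) ≤ y := by
    refine csSup_le (insert_nonempty _ _) ?_
    rintro _ (rfl | ⟨G, hG, rfl⟩)
    exacts [csInf_le hC.bddBelow hy, hG]
  refine hle.eq_or_lt.resolve_right fun hlt => ?_
  obtain ⟨G, h₁, h₂⟩ := exists_gap_between hC.isClosed htd (supRight_mem hne hC _) hy hlt
  exact ((le_supRight hne hC h₂).trans h₁).not_gt G.left_lt_right

theorem leftGaps_right (G : Gap C) : leftGaps C G.right = Iic G :=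
  Set.ext fun _ => Gap.right_le_right_iff

theorem leftGaps_left (G : Gap C) : leftGaps C G.left = Iio G :=
  Set.ext fun _ => Gap.right_le_left_iff

theorem leftGaps_sInf (hC : IsCompact C) : leftGaps C (sInf C) = ∅ :=
  eq_empty_of_forall_notMem fun G hG =>
    (csInf_le hC.bddBelow G.left_mem).not_gt (G.left_lt_right.trans_le hG)

theorem leftGaps_sSup (hC : IsCompact C) : leftGaps C (sSup C) = univ :=
  eq_univ_of_forall fun G => le_csSup hC.bddAbove G.right_mem

end SupRight

noncomputable def gapMap {C₁ C₂ : Set ℝ} (ψ : Gap C₁ ≃o Gap C₂) (x : ℝ) : ℝ :=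
  supRight C₂ (ψ '' leftGaps C₁ x)

section GapMap

variable {C₁ C₂ : Set ℝ} (ψ : Gap C₁ ≃o Gap C₂)

theorem gapMap_mem (hne₂ : C₂.Nonempty) (hC₂ : IsCompact C₂) (x : ℝ) : gapMap ψ x ∈ C₂ :=
  supRight_mem hne₂ hC₂ _

theorem monotone_gapMap (hne₂ : C₂.Nonempty) (hC₂ : IsCompact C₂) : Monotone (gapMap ψ) :=
  fun _ _ h => supRight_mono hne₂ hC₂ (image_mono fun _ hG => le_trans hG h)

theorem gapMap_eq_of_image_eq (hC₂ : IsCompact C₂) (htd₂ : IsTotallyDisconnected C₂) {x y : ℝ}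
    (hy : y ∈ C₂) (h : ψ '' leftGaps C₁ x = leftGaps C₂ y) : gapMap ψ x = y := by
  rw [gapMap, h, supRight_leftGaps hC₂ htd₂ hy]

theorem gapMap_right (hC₂ : IsCompact C₂) (htd₂ : IsTotallyDisconnected C₂) (G : Gap C₁) :
    gapMap ψ G.right = (ψ G).right :=
  gapMap_eq_of_image_eq ψ hC₂ htd₂ (ψ G).right_mem
    (by rw [leftGaps_right, leftGaps_right, ψ.image_Iic])

theorem gapMap_left (hC₂ : IsCompact C₂) (htd₂ : IsTotallyDisconnected C₂) (G : Gap C₁) :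
    gapMap ψ G.left = (ψ G).left :=
  gapMap_eq_of_image_eq ψ hC₂ htd₂ (ψ G).left_mem
    (by rw [leftGaps_left, leftGaps_left, ψ.image_Iio])

theorem gapMap_sInf (hC₁ : IsCompact C₁) (hne₂ : C₂.Nonempty) (hC₂ : IsCompact C₂)
    (htd₂ : IsTotallyDisconnected C₂) : gapMap ψ (sInf C₁) = sInf C₂ :=
  gapMap_eq_of_image_eq ψ hC₂ htd₂ (hC₂.sInf_mem hne₂)
    (by rw [leftGaps_sInf hC₁, leftGaps_sInf hC₂, image_empty])

theorem gapMap_sSup (hC₁ : IsCompact C₁) (hne₂ : C₂.Nonempty) (hC₂ : IsCompact C₂)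
    (htd₂ : IsTotallyDisconnected C₂) : gapMap ψ (sSup C₁) = sSup C₂ :=
  gapMap_eq_of_image_eq ψ hC₂ htd₂ (hC₂.sSup_mem hne₂)
    (by rw [leftGaps_sSup hC₁, leftGaps_sSup hC₂, image_univ_of_surjective ψ.surjective])

theorem right_le_gapMap_iff (hne₂ : C₂.Nonempty) (hC₂ : IsCompact C₂)
    (htd₂ : IsTotallyDisconnected C₂) {x : ℝ} (hx : x ∈ C₁) (G : Gap C₁) :
    (ψ G).right ≤ gapMap ψ x ↔ G.right ≤ x := by
  refine ⟨fun h => not_lt.1 fun hlt => ?_, fun h => le_supRight hne₂ hC₂ (mem_image_of_mem ψ h)⟩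
  have := monotone_gapMap ψ hne₂ hC₂ (G.le_left_of_lt_right hx hlt)
  rw [gapMap_left ψ hC₂ htd₂] at this
  exact (h.trans this).not_gt (ψ G).left_lt_right

theorem gapMap_symm_gapMap (hC₁ : IsCompact C₁) (htd₁ : IsTotallyDisconnected C₁)
    (hne₂ : C₂.Nonempty) (hC₂ : IsCompact C₂) (htd₂ : IsTotallyDisconnected C₂) {x : ℝ}
    (hx : x ∈ C₁) : gapMap ψ.symm (gapMap ψ x) = x := by
  refine gapMap_eq_of_image_eq ψ.symm hC₁ htd₁ hx ?_
  rw [OrderIso.image_eq_preimage_symm]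
  exact Set.ext fun G => right_le_gapMap_iff ψ hne₂ hC₂ htd₂ hx G

end GapMap

noncomputable def affineInterp (p q P Q x : ℝ) : ℝ := P + (x - p) * (Q - P) / (q - p)

section AffineInterp

variable {p q P Q : ℝ}

theorem affineInterp_self (p P x : ℝ) : affineInterp p p P P x = P := by
  simp [affineInterp]

theorem affineInterp_left : affineInterp p q P Q p = P := by
  simp [affineInterp]

theorem affineInterp_right (hpq : p ≠ q) : affineInterp p q P Q q = Q := by
  rw [affineInterp, mul_div_assoc, mul_div_cancel₀ _ (sub_ne_zero.2 hpq.symm)]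
  ring

theorem monotone_affineInterp (hpq : p < q) (hPQ : P ≤ Q) : Monotone (affineInterp p q P Q) := by
  intro x y hxy
  have : 0 ≤ Q - P := sub_nonneg.2 hPQ
  have : 0 < q - p := sub_pos.2 hpq
  unfold affineInterp
  gcongr

theorem strictMono_affineInterp (hpq : p < q) (hPQ : P < Q) :
    StrictMono (affineInterp p q P Q) := by
  intro x y hxy
  have : 0 < Q - P := sub_pos.2 hPQ
  have : 0 < q - p := sub_pos.2 hpq
  unfold affineInterp
  gcongr

theorem affineInterp_mem_Ioo (hpq : p < q) (hPQ : P < Q) {x : ℝ} (hx : x ∈ Ioo p q) :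
    affineInterp p q P Q x ∈ Ioo P Q := by
  have hmono := strictMono_affineInterp hpq hPQ
  constructor
  · simpa only [affineInterp_left] using hmono hx.1
  · simpa only [affineInterp_right hpq.ne] using hmono hx.2

theorem affineInterp_affineInterp (hpq : p ≠ q) (hPQ : P ≠ Q) (x : ℝ) :
    affineInterp P Q p q (affineInterp p q P Q x) = x := by
  have : q - p ≠ 0 := sub_ne_zero.2 hpq.symm
  have : Q - P ≠ 0 := sub_ne_zero.2 hPQ.symm
  unfold affineInterp
  field_simp
  ring

end AffineInterp

/-- On `C` the last branch is `f x`: there `floorIn C x = ceilIn C x = x`, and the division by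
zero gives `0`. -/
noncomputable def gapExtend (C : Set ℝ) (f : ℝ → ℝ) (x : ℝ) : ℝ :=
  if x < sInf C then f (sInf C) + (x - sInf C)
  else if sSup C < x then f (sSup C) + (x - sSup C)
  else affineInterp (floorIn C x) (ceilIn C x) (f (floorIn C x)) (f (ceilIn C x)) x

section GapExtend

variable {C : Set ℝ} {f : ℝ → ℝ} {x : ℝ}

theorem lt_sInf_or_sSup_lt_or_mem_or_exists_gap (hne : C.Nonempty) (hC : IsCompact C) (x : ℝ) :
    x < sInf C ∨ sSup C < x ∨ x ∈ C ∨ ∃ G : Gap C, x ∈ Ioo G.left G.right := by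
  by_cases h₁ : x < sInf C
  · exact Or.inl h₁
  by_cases h₂ : sSup C < x
  · exact Or.inr (Or.inl h₂)
  by_cases hx : x ∈ C
  · exact Or.inr (Or.inr (Or.inl hx))
  exact Or.inr (Or.inr (Or.inr (exists_gap_mem_of_notMem hC.isClosed hx
    ⟨sInf C, hC.sInf_mem hne, not_lt.1 h₁⟩ ⟨sSup C, hC.sSup_mem hne, not_lt.1 h₂⟩)))

theorem gapExtend_of_lt_sInf (h : x < sInf C) : gapExtend C f x = f (sInf C) + (x - sInf C) :=
  if_pos h

theorem gapExtend_of_sSup_lt (hne : C.Nonempty) (hC : IsCompact C) (h : sSup C < x) :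
    gapExtend C f x = f (sSup C) + (x - sSup C) := by
  rw [gapExtend, if_neg (not_lt.2 ((csInf_le_csSup hne hC.bddBelow hC.bddAbove).trans h.le)),
    if_pos h]

theorem gapExtend_of_mem (hC : IsCompact C) (hx : x ∈ C) : gapExtend C f x = f x := by
  rw [gapExtend, if_neg (not_lt.2 (csInf_le hC.bddBelow hx)),
    if_neg (not_lt.2 (le_csSup hC.bddAbove hx)), floorIn_of_mem hx, ceilIn_of_mem hx,
    affineInterp_self]

theorem Gap.gapExtend_eq (hC : IsCompact C) (G : Gap C) (hx : x ∈ Ioo G.left G.right) :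
    gapExtend C f x = affineInterp G.left G.right (f G.left) (f G.right) x := by
  rw [gapExtend, if_neg (not_lt.2 ((csInf_le hC.bddBelow G.left_mem).trans hx.1.le)),
    if_neg (not_lt.2 (hx.2.le.trans (le_csSup hC.bddAbove G.right_mem))), G.floorIn_eq hx,
    G.ceilIn_eq hx]

theorem gapExtend_le_of_le_mem (hne : C.Nonempty) (hC : IsCompact C) (hf : Monotone f) {c : ℝ}
    (hc : c ∈ C) (hxc : x ≤ c) : gapExtend C f x ≤ f c := by
  rcases lt_sInf_or_sSup_lt_or_mem_or_exists_gap hne hC x with hx | hx | hx | ⟨G, hG⟩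
  · rw [gapExtend_of_lt_sInf hx]
    linarith [hf (csInf_le hC.bddBelow hc)]
  · exact absurd (hx.trans_le hxc) (not_lt.2 (le_csSup hC.bddAbove hc))
  · rw [gapExtend_of_mem hC hx]
    exact hf hxc
  · rw [G.gapExtend_eq hC hG]
    calc affineInterp G.left G.right (f G.left) (f G.right) x
        ≤ affineInterp G.left G.right (f G.left) (f G.right) G.right :=
          monotone_affineInterp G.left_lt_right (hf G.left_lt_right.le) hG.2.le
      _ = f G.right := affineInterp_right G.left_lt_right.ne
      _ ≤ f c := hf (G.right_le_of_left_lt hc (hG.1.trans_le hxc))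

theorem le_gapExtend_of_mem_le (hne : C.Nonempty) (hC : IsCompact C) (hf : Monotone f) {c : ℝ}
    (hc : c ∈ C) (hcx : c ≤ x) : f c ≤ gapExtend C f x := by
  rcases lt_sInf_or_sSup_lt_or_mem_or_exists_gap hne hC x with hx | hx | hx | ⟨G, hG⟩
  · exact absurd (hcx.trans_lt hx) (not_lt.2 (csInf_le hC.bddBelow hc))
  · rw [gapExtend_of_sSup_lt hne hC hx]
    linarith [hf (le_csSup hC.bddAbove hc)]
  · rw [gapExtend_of_mem hC hx]
    exact hf hcx
  · rw [G.gapExtend_eq hC hG]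
    calc f c ≤ f G.left := hf (G.le_left_of_lt_right hc (hcx.trans_lt hG.2))
      _ = affineInterp G.left G.right (f G.left) (f G.right) G.left := affineInterp_left.symm
      _ ≤ affineInterp G.left G.right (f G.left) (f G.right) x :=
          monotone_affineInterp G.left_lt_right (hf G.left_lt_right.le) hG.1.le

theorem monotone_gapExtend (hne : C.Nonempty) (hC : IsCompact C) (hf : Monotone f) :
    Monotone (gapExtend C f) := by
  intro x y hxy
  by_cases hc : ∃ c ∈ C, c ∈ Icc x y
  · obtain ⟨c, hc, hxc, hcy⟩ := hc
    exact (gapExtend_le_of_le_mem hne hC hf hc hxc).trans (le_gapExtend_of_mem_le hne hC hf hc hcy)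
  push Not at hc
  rcases lt_sInf_or_sSup_lt_or_mem_or_exists_gap hne hC x with hx | hx | hx | ⟨G, hG⟩
  · have hy : y < sInf C := not_le.1 fun h => hc _ (hC.sInf_mem hne) ⟨hx.le, h⟩
    rw [gapExtend_of_lt_sInf hx, gapExtend_of_lt_sInf hy]
    linarith
  · rw [gapExtend_of_sSup_lt hne hC hx, gapExtend_of_sSup_lt hne hC (hx.trans_le hxy)]
    linarith
  · exact absurd ⟨le_rfl, hxy⟩ (hc x hx)
  · have hy : y ∈ Ioo G.left G.right :=
      ⟨hG.1.trans_le hxy, not_le.1 fun h => hc _ G.right_mem ⟨hG.2.le, h⟩⟩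
    rw [G.gapExtend_eq hC hG, G.gapExtend_eq hC hy]
    exact monotone_affineInterp G.left_lt_right (hf G.left_lt_right.le) hxy

theorem gapExtend_gapExtend {D : Set ℝ} {g : ℝ → ℝ} (hne : C.Nonempty) (hC : IsCompact C)
    (hD : IsCompact D) (hf_sInf : f (sInf C) = sInf D) (hf_sSup : f (sSup C) = sSup D)
    (hf_mem : ∀ c ∈ C, f c ∈ D) (hgf : ∀ c ∈ C, g (f c) = c)
    (hf_gap : ∀ G : Gap C, ∃ G' : Gap D, G'.left = f G.left ∧ G'.right = f G.right) (x : ℝ) :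
    gapExtend D g (gapExtend C f x) = x := by
  have hneD : D.Nonempty := ⟨_, hf_mem _ (hC.sInf_mem hne)⟩
  rcases lt_sInf_or_sSup_lt_or_mem_or_exists_gap hne hC x with hx | hx | hx | ⟨G, hG⟩
  · have hg : g (sInf D) = sInf C := hf_sInf ▸ hgf _ (hC.sInf_mem hne)
    have hfx : gapExtend C f x < sInf D := by
      rw [gapExtend_of_lt_sInf hx, hf_sInf]
      linarith
    rw [gapExtend_of_lt_sInf hfx, hg, gapExtend_of_lt_sInf hx, hf_sInf]
    ring
  · have hg : g (sSup D) = sSup C := hf_sSup ▸ hgf _ (hC.sSup_mem hne)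
    have hfx : sSup D < gapExtend C f x := by
      rw [gapExtend_of_sSup_lt hne hC hx, hf_sSup]
      linarith
    rw [gapExtend_of_sSup_lt hneD hD hfx, hg, gapExtend_of_sSup_lt hne hC hx, hf_sSup]
    ring
  · rw [gapExtend_of_mem hC hx, gapExtend_of_mem hD (hf_mem x hx), hgf x hx]
  · obtain ⟨G', hl, hr⟩ := hf_gap G
    have hlt : f G.left < f G.right := hl ▸ hr ▸ G'.left_lt_right
    have hfx : gapExtend C f x ∈ Ioo G'.left G'.right := by
      rw [G.gapExtend_eq hC hG, hl, hr]
      exact affineInterp_mem_Ioo G.left_lt_right hlt hG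
    rw [G'.gapExtend_eq hD hfx, G.gapExtend_eq hC hG, hl, hr, hgf _ G.left_mem,
      hgf _ G.right_mem, affineInterp_affineInterp G.left_lt_right.ne hlt.ne]

end GapExtend

section GapOrderIso

variable {C₁ C₂ : Set ℝ}

theorem gapExtend_symm_gapExtend (ψ : Gap C₁ ≃o Gap C₂) (hne₁ : C₁.Nonempty)
    (hC₁ : IsCompact C₁) (htd₁ : IsTotallyDisconnected C₁) (hne₂ : C₂.Nonempty)
    (hC₂ : IsCompact C₂) (htd₂ : IsTotallyDisconnected C₂) (x : ℝ) :
    gapExtend C₂ (gapMap ψ.symm) (gapExtend C₁ (gapMap ψ) x) = x :=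
  gapExtend_gapExtend hne₁ hC₁ hC₂ (gapMap_sInf ψ hC₁ hne₂ hC₂ htd₂)
    (gapMap_sSup ψ hC₁ hne₂ hC₂ htd₂) (fun c _ => gapMap_mem ψ hne₂ hC₂ c)
    (fun _ hc => gapMap_symm_gapMap ψ hC₁ htd₁ hne₂ hC₂ htd₂ hc)
    (fun G => ⟨ψ G, (gapMap_left ψ hC₂ htd₂ G).symm, (gapMap_right ψ hC₂ htd₂ G).symm⟩) x

theorem exists_orderIso_extending_gapMap (ψ : Gap C₁ ≃o Gap C₂) (hne₁ : C₁.Nonempty)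
    (hC₁ : IsCompact C₁) (htd₁ : IsTotallyDisconnected C₁) (hne₂ : C₂.Nonempty)
    (hC₂ : IsCompact C₂) (htd₂ : IsTotallyDisconnected C₂) :
    ∃ e : ℝ ≃o ℝ, (∀ x ∈ C₁, e x = gapMap ψ x) ∧ e '' C₁ = C₂ := by
  let e : ℝ ≃ ℝ :=
    ⟨gapExtend C₁ (gapMap ψ), gapExtend C₂ (gapMap ψ.symm),
      gapExtend_symm_gapExtend ψ hne₁ hC₁ htd₁ hne₂ hC₂ htd₂,
      gapExtend_symm_gapExtend ψ.symm hne₂ hC₂ htd₂ hne₁ hC₁ htd₁⟩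
  refine ⟨e.toOrderIso (monotone_gapExtend hne₁ hC₁ (monotone_gapMap ψ hne₂ hC₂))
    (monotone_gapExtend hne₂ hC₂ (monotone_gapMap ψ.symm hne₁ hC₁)),
    fun x hx => gapExtend_of_mem hC₁ hx, Set.ext fun y => ⟨?_, fun hy => ?_⟩⟩
  · rintro ⟨x, hx, rfl⟩
    show gapExtend C₁ (gapMap ψ) x ∈ C₂
    rw [gapExtend_of_mem hC₁ hx]
    exact gapMap_mem ψ hne₂ hC₂ x
  · refine ⟨e.symm y, ?_, e.apply_symm_apply y⟩
    show gapExtend C₂ (gapMap ψ.symm) y ∈ C₁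
    rw [gapExtend_of_mem hC₂ hy]
    exact gapMap_mem ψ.symm hne₁ hC₁ y

end GapOrderIso

theorem exists_increasing_homeo_mapping_cantor_sets (C₁ C₂ : Set ℝ) (a₁ a₂ : ℝ)
    (hC₁ : IsCantorSet C₁) (hC₂ : IsCantorSet C₂)
    (ha₁ : a₁ ∈ C₁) (ha₂ : a₂ ∈ C₂)
    (hacc₁ : TwoSidedAcc C₁ a₁) (hacc₂ : TwoSidedAcc C₂ a₂) :
    ∃ g : ℝ ≃ₜ ℝ, StrictMono ⇑g ∧ g a₁ = a₂ ∧ ⇑g '' C₁ = C₂ := by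
  obtain ⟨hne₁, hcomp₁, htd₁, hperf₁⟩ := hC₁
  obtain ⟨hne₂, hcomp₂, htd₂, hperf₂⟩ := hC₂
  obtain ⟨ψ, hψ⟩ := exists_gap_orderIso htd₁ hperf₁ htd₂ hperf₂ ha₁ ha₂ hacc₁ hacc₂
  obtain ⟨e, he, himage⟩ :=
    exists_orderIso_extending_gapMap ψ hne₁ hcomp₁ htd₁ hne₂ hcomp₂ htd₂
  refine ⟨e.toHomeomorph, e.strictMono, ?_, himage⟩
  rw [OrderIso.coe_toHomeomorph, he a₁ ha₁]
  exact gapMap_eq_of_image_eq ψ hcomp₂ htd₂ ha₂ hψ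
end

section
/- Let G be an abelian group, Y ⊆ G an infinite independent subset with no element of order 2, and I an index set with |I| = |G|. Suppose X_i ⊆ Y is nonempty for each i ∈ I, and the set of indices i with |X_i| = |Y| has cardinality |I|. Then there is a map ρ : I → G such that the sets ρ(i) + X_i are pairwise disjoint and their union is G. -/
/-- A subset `Y` of an abelian group is independent if `0 ∉ Y` and every ℤ-linear
combination of distinct elements of `Y` equaling `0` has all terms `k • x = 0`. -/
def IsIndependentSet {G : Type*} [AddCommGroup G] (Y : Set G) : Prop :=
  0 ∉ Y ∧ ∀ f : G →₀ ℤ, ↑f.support ⊆ Y → (f.sum fun x k => k • x) = 0 →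
    ∀ x ∈ f.support, f x • x = 0

/-!
Let `V` be the subgroup generated by `Y`; as `Y` is infinite, `|V| = |Y| =: λ`. The index set
splits into `|G / V|` blocks of size `λ`, each containing `λ` indices with `|X i| = λ`, so it is
enough to tile `V` by the translates indexed by one block and to move that tiling to each coset.

To tile `V`, list the block and the points of `V` in order type `λ` and place the translates one
at a time, each at an integer combination of elements of `Y`. The new base is either `a + b` for
two elements `a ≠ b` of `Y` used by no earlier base, or, when `X i` is large and its assigned point
`v ∈ V` is not yet covered, `v - x` for an unused `x ∈ X i`, which covers `v`. At each stage fewer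
than `λ` elements of `Y` are in use, so such choices exist. Comparing the coefficients of `a`
(resp. `x`) in two representations of a common point shows that the new translate misses the
earlier ones: the coefficients differ by at most `2`, and `Y` is independent without elements
of order `2`, so they agree.
-/

open Cardinal Finsupp
open scoped Pointwise

universe u

theorem Cardinal.mk_iUnion_lt_of_finite {α ι : Type u} {s : ι → Set α} {κ : Cardinal.{u}}
    (hκ : ℵ₀ ≤ κ) (hι : #ι < κ) (hs : ∀ i, (s i).Finite) : #(⋃ i, s i) < κ := by
  rcases lt_or_ge #ι ℵ₀ with hfin | hinf
  · have : Finite ι := Cardinal.lt_aleph0_iff_finite.1 hfin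
    exact (Set.finite_iUnion hs).lt_aleph0.trans_le hκ
  · calc #(⋃ i, s i) ≤ #ι * ⨆ i, #(s i) := mk_iUnion_le s
      _ ≤ #ι * ℵ₀ := by gcongr; exact ciSup_le' fun i => (hs i).lt_aleph0.le
      _ = #ι := mul_aleph0_eq hinf
      _ < κ := hι

theorem Cardinal.exists_ne_notMem_of_mk_lt {α : Type u} {S T : Set α} (hS : ℵ₀ ≤ #S)
    (hT : #T < #S) : ∃ a ∈ S, ∃ b ∈ S, a ≠ b ∧ a ∉ T ∧ b ∉ T := by
  have hinf : (S \ T).Infinite := by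
    intro hfin
    have : #S ≤ #↥(S \ T) + #T :=
      (mk_le_mk_of_subset (Set.subset_sdiff_union S T)).trans (mk_union_le _ _)
    exact this.not_gt (add_lt_of_lt hS (hfin.lt_aleph0.trans_le hS) hT)
  obtain ⟨a, ⟨haS, haT⟩, b, ⟨hbS, hbT⟩, hab⟩ := hinf.nontrivial
  exact ⟨a, haS, b, hbS, hab, haT, hbT⟩

theorem Cardinal.exists_fibers_mk_eq {I Q L : Type u} [Infinite L] (P : I → Prop)
    (hI : #I = #Q * #L) (hP : #{i // P i} = #I) :
    ∃ c : I → Q, ∀ q, #{i // c i = q} = #L ∧ #{j : {i // c i = q} // P j} = #L := by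
  classical
  obtain ⟨eP⟩ : Nonempty ({i // P i} ≃ Q × L) := Cardinal.eq.1 (by simp [hP, hI])
  obtain ⟨eN⟩ : Nonempty ({i // ¬P i} ↪ Q × L) :=
    (le_def _ _).1 ((mk_subtype_le _).trans (by simp [hI]))
  -- `ψ` maps the indices satisfying `P` onto `Q × inl L`
  let ψ : I → Q × (L ⊕ L) :=
    (Equiv.prodSumDistrib Q L L).symm ∘ Sum.map eP eN ∘ (Equiv.sumCompl P).symm
  have hψ : ψ.Injective := (Equiv.injective _).comp
    ((eP.injective.sumMap eN.injective).comp (Equiv.injective _))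
  have hψP : ∀ i : {i // P i}, ψ i = ((eP i).1, .inl (eP i).2) := fun i => by
    simp [ψ, Equiv.sumCompl_symm_apply_pos]
  refine ⟨fun i => (ψ i).1, fun q => ?_⟩
  have hle : #{i // (ψ i).1 = q} ≤ #L := by
    calc #{i // (ψ i).1 = q} ≤ #(L ⊕ L) := mk_le_of_injective (f := fun i => (ψ i).2)
          fun i j hij => Subtype.ext (hψ (Prod.ext (i.2.trans j.2.symm) hij))
      _ = #L := by simp [add_eq_self (aleph0_le_mk L)]
  have hge : #L ≤ #{j : {i // (ψ i).1 = q} // P j} := by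
    refine mk_le_of_injective (f := fun y => ⟨⟨eP.symm (q, y), by simp [hψP]⟩,
      (eP.symm (q, y)).2⟩) fun y y' h => ?_
    simpa using congrArg (fun j => (eP ⟨j.1.1, j.2⟩).2) h
  exact ⟨le_antisymm hle (hge.trans (mk_subtype_le _)),
    le_antisymm ((mk_subtype_le _).trans hle) hge⟩

theorem Cardinal.mk_span_int_eq {G : Type u} [AddCommGroup G] {Y : Set G} (hY : Y.Infinite) :
    #(Submodule.span ℤ Y) = #Y := by
  refine le_antisymm ?_ (mk_le_mk_of_subset Submodule.subset_span)
  have : Infinite Y := hY.to_subtype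
  have hspan : (Submodule.span ℤ Y : Set G) = linearCombination ℤ id '' supported ℤ ℤ Y := by
    rw [← Set.image_id Y, span_image_eq_map_linearCombination, Submodule.map_coe, Set.image_id]
  calc #(Submodule.span ℤ Y)
      = #(linearCombination ℤ id '' (supported ℤ ℤ Y : Set (G →₀ ℤ))) := by rw [← hspan]; rfl
    _ ≤ #(supported ℤ ℤ Y : Set (G →₀ ℤ)) := mk_image_le
    _ = #(Y →₀ ℤ) := mk_congr (supportedEquivFinsupp Y).toEquiv
    _ = #Y := by simp

theorem exists_forall_of_wellFoundedLT {O C : Type*} [Preorder O] [WellFoundedLT O]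
    (P : (o : O) → (Set.Iio o → C) → C → Prop) (h : ∀ o p, ∃ c, P o p c) :
    ∃ F : O → C, ∀ o, P o (fun o' => F o') (F o) := by
  refine ⟨wellFounded_lt.fix fun o ih => (h o fun o' => ih o' o'.2).choose, fun o => ?_⟩
  rw [WellFounded.fix_eq]
  exact (h o _).choose_spec

theorem QuotientAddGroup.preimage_mk_singleton {G : Type*} [AddGroup G] (H : AddSubgroup G)
    (q : G ⧸ H) : ((↑) : G → G ⧸ H) ⁻¹' {q} = q.out +ᵥ (H : Set G) := by
  ext g
  rw [Set.mem_vadd_set_iff_neg_vadd_mem, vadd_eq_add, SetLike.mem_coe, ← QuotientAddGroup.eq,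
    QuotientAddGroup.out_eq', Set.mem_preimage, Set.mem_singleton_iff, eq_comm]

def Tiles {α ι : Type*} (S : ι → Set α) (A : Set α) : Prop :=
  Pairwise (Function.onFun Disjoint S) ∧ ⋃ i, S i = A

namespace Tiles

variable {α ι κ : Type*} {S : ι → Set α} {A : Set α}

theorem comp_equiv (h : Tiles S A) (e : κ ≃ ι) : Tiles (S ∘ e) A :=
  ⟨h.1.comp_of_injective e.injective, (e.surjective.iUnion_comp S).trans h.2⟩

theorem vadd {G : Type*} [AddGroup G] [AddAction G α] (h : Tiles S A) (g : G) :
    Tiles (fun i => g +ᵥ S i) (g +ᵥ A) :=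
  ⟨fun _ _ hij => Set.disjoint_vadd_set.2 (h.1 hij), by rw [← h.2, Set.vadd_set_iUnion]⟩

theorem of_fibers {Q : Type*} (π : α → Q) (c : ι → Q)
    (h : ∀ q, Tiles (fun j : {i // c i = q} => S j) (π ⁻¹' {q})) : Tiles S Set.univ := by
  have hsub : ∀ i, S i ⊆ π ⁻¹' {c i} := fun i =>
    (h (c i)).2 ▸ Set.subset_iUnion (fun j : {i' // c i' = c i} => S j) ⟨i, rfl⟩
  refine ⟨fun i j hij => ?_, Set.eq_univ_of_forall fun a => ?_⟩
  · by_cases hc : c i = c j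
    · exact (h (c j)).1 (i := ⟨i, hc⟩) (j := ⟨j, rfl⟩) (by simpa using hij)
    · exact Set.disjoint_of_subset (hsub i) (hsub j)
        ((Set.disjoint_singleton.2 hc).preimage π)
  · have ha : a ∈ π ⁻¹' {π a} := rfl
    rw [← (h (π a)).2] at ha
    obtain ⟨j, hj⟩ := Set.mem_iUnion.1 ha
    exact Set.mem_iUnion.2 ⟨j, hj⟩

end Tiles

theorem eq_zero_of_zsmul_eq_zero_of_natAbs_le_two {G : Type*} [AddGroup G] {y : G}
    (hy : y ≠ 0) (hy2 : y + y ≠ 0) {c : ℤ} (hc : c.natAbs ≤ 2) (h : c • y = 0) : c = 0 := by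
  have h' : c.natAbs • y = 0 := by
    rcases Int.natAbs_eq c with hc' | hc' <;> rw [hc'] at h
    · exact_mod_cast h
    · simpa using h
  rw [← Int.natAbs_eq_zero]
  interval_cases hn : c.natAbs
  · rfl
  · exact absurd (by simpa using h') hy
  · exact absurd (by simpa [two_nsmul] using h') hy2

namespace IsIndependentSet

variable {G ι : Type u} [AddCommGroup G] {Y : Set G}

theorem apply_eq_of_linearCombination_eq (hY : IsIndependentSet Y)
    (hY2 : ∀ y ∈ Y, y + y ≠ 0) {f g : G →₀ ℤ} (hf : f ∈ supported ℤ ℤ Y)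
    (hg : g ∈ supported ℤ ℤ Y) (h : linearCombination ℤ id f = linearCombination ℤ id g)
    (x : G) (hx : (f x - g x).natAbs ≤ 2) : f x = g x := by
  by_contra hne
  have hsupp : x ∈ (f - g).support := by simpa [sub_eq_zero] using hne
  have hxY : x ∈ Y := (mem_supported ℤ _).1 (sub_mem hf hg) hsupp
  have hzero : linearCombination ℤ id (f - g) = 0 := by simp [h]
  have hsmul : (f - g) x • x = 0 :=
    hY.2 (f - g) ((mem_supported ℤ _).1 (sub_mem hf hg))
      (by simpa [linearCombination_apply] using hzero) x hsupp
  exact hne (sub_eq_zero.1 (eq_zero_of_zsmul_eq_zero_of_natAbs_le_two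
    (fun h0 => hY.1 (h0 ▸ hxY)) (hY2 x hxY) hx (by simpa using hsmul)))

theorem disjoint_add_vadd (hY : IsIndependentSet Y) (hY2 : ∀ y ∈ Y, y + y ≠ 0)
    {a b : G} (ha : a ∈ Y) (hb : b ∈ Y) (hab : a ≠ b) {f : G →₀ ℤ}
    (hf : f ∈ supported ℤ ℤ Y) (hfa : f a = 0) (hfb : f b = 0) {X₁ X₂ : Set G}
    (hX₁ : X₁ ⊆ Y) (hX₂ : X₂ ⊆ Y) :
    Disjoint ((a + b) +ᵥ X₁) (linearCombination ℤ id f +ᵥ X₂) := by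
  classical
  rw [Set.disjoint_left]
  rintro _ ⟨x, hx, rfl⟩ ⟨v, hv, hvx⟩
  have hcoeff := hY.apply_eq_of_linearCombination_eq hY2
    (f := single a 1 + single b 1 + single x 1) (g := f + single v 1)
    (add_mem (add_mem (single_mem_supported ℤ 1 ha) (single_mem_supported ℤ 1 hb))
      (single_mem_supported ℤ 1 (hX₁ hx)))
    (add_mem hf (single_mem_supported ℤ 1 (hX₂ hv)))
    (by simpa [add_assoc] using hvx.symm)
  -- at `c ∈ {a, b}` the coefficients are `1 + [x = c]` and `[v = c]`
  have hv_eq : ∀ c, f c = 0 → (single a 1 + single b 1 : G →₀ ℤ) c = 1 → v = c := by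
    intro c hfc hc
    have := hcoeff c (by
      rw [Finsupp.add_apply, hc, Finsupp.add_apply, hfc, single_apply, single_apply]
      split_ifs <;> omega)
    rw [Finsupp.add_apply, hc, Finsupp.add_apply, hfc, single_apply, single_apply] at this
    split_ifs at this with h₁ h₂ <;> first | exact h₂.symm | omega
  exact hab ((hv_eq a hfa (by simp [hab.symm])).symm.trans (hv_eq b hfb (by simp [hab])))

theorem mem_vadd_of_not_disjoint_sub_vadd (hY : IsIndependentSet Y)
    (hY2 : ∀ y ∈ Y, y + y ≠ 0) {x : G} (hx : x ∈ Y) {f g : G →₀ ℤ}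
    (hf : f ∈ supported ℤ ℤ Y) (hg : g ∈ supported ℤ ℤ Y) (hfx : f x = 0) (hgx : g x = 0)
    {X₁ X₂ : Set G} (hX₁ : X₁ ⊆ Y) (hX₂ : X₂ ⊆ Y)
    (h : ¬Disjoint ((linearCombination ℤ id f - x) +ᵥ X₁) (linearCombination ℤ id g +ᵥ X₂)) :
    linearCombination ℤ id f ∈ linearCombination ℤ id g +ᵥ X₂ := by
  classical
  obtain ⟨_, ⟨u, hu, rfl⟩, ⟨v, hv, hvu⟩⟩ := Set.not_disjoint_iff.1 h
  have hcoeff := hY.apply_eq_of_linearCombination_eq hY2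
    (f := f - single x 1 + single u 1) (g := g + single v 1)
    (add_mem (sub_mem hf (single_mem_supported ℤ 1 hx)) (single_mem_supported ℤ 1 (hX₁ hu)))
    (add_mem hg (single_mem_supported ℤ 1 (hX₂ hv)))
    (by simpa using hvu.symm)
  -- at `x` the coefficients are `[u = x] - 1` and `[v = x]`
  have hux : u = x := by
    have := hcoeff x (by
      simp only [Finsupp.add_apply, Finsupp.sub_apply, single_apply, hfx, hgx]
      split_ifs <;> omega)
    simp only [Finsupp.add_apply, Finsupp.sub_apply, single_apply, hfx, hgx] at this
    split_ifs at this with h₁ h₂ <;> first | exact h₁.symm | omega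
  subst hux
  exact ⟨v, hv, by simpa using hvu⟩

theorem exists_disjoint_vadd (hY : IsIndependentSet Y) (hY2 : ∀ y ∈ Y, y + y ≠ 0)
    (hYinf : Y.Infinite) (hι : #ι < #Y) (prev : ι → supported ℤ ℤ Y) (Xp : ι → Set G)
    (hXp : ∀ i, Xp i ⊆ Y) {Z : Set G} (hZ : Z ⊆ Y) :
    ∃ f : supported ℤ ℤ Y, ∀ i,
      Disjoint (linearCombination ℤ id (f : G →₀ ℤ) +ᵥ Z)
        (linearCombination ℤ id (prev i : G →₀ ℤ) +ᵥ Xp i) := by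
  have hlam : ℵ₀ ≤ #Y := Cardinal.infinite_iff.1 hYinf.to_subtype
  obtain ⟨a, ha, b, hb, hab, haU, hbU⟩ := Cardinal.exists_ne_notMem_of_mk_lt hlam
    (Cardinal.mk_iUnion_lt_of_finite hlam hι fun i => (prev i : G →₀ ℤ).support.finite_toSet)
  simp only [Set.mem_iUnion, Finset.mem_coe, Finsupp.mem_support_iff, not_exists,
    not_not] at haU hbU
  refine ⟨⟨single a 1 + single b 1,
    add_mem (single_mem_supported ℤ 1 ha) (single_mem_supported ℤ 1 hb)⟩, fun i => ?_⟩
  simpa using hY.disjoint_add_vadd hY2 ha hb hab (prev i).2 (haU i) (hbU i) hZ (hXp i)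

theorem exists_disjoint_vadd_of_notMem (hY : IsIndependentSet Y) (hY2 : ∀ y ∈ Y, y + y ≠ 0)
    (hYinf : Y.Infinite) (hι : #ι < #Y) (prev : ι → supported ℤ ℤ Y) (Xp : ι → Set G)
    (hXp : ∀ i, Xp i ⊆ Y) {Z : Set G} (hZY : Z ⊆ Y) (hZ : #Z = #Y) {v : G}
    (hv : v ∈ Submodule.span ℤ Y)
    (hvU : v ∉ ⋃ i, linearCombination ℤ id (prev i : G →₀ ℤ) +ᵥ Xp i) :
    ∃ f : supported ℤ ℤ Y, (∀ i,
      Disjoint (linearCombination ℤ id (f : G →₀ ℤ) +ᵥ Z)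
        (linearCombination ℤ id (prev i : G →₀ ℤ) +ᵥ Xp i)) ∧
      v ∈ linearCombination ℤ id (f : G →₀ ℤ) +ᵥ Z := by
  have hlam : ℵ₀ ≤ #Y := Cardinal.infinite_iff.1 hYinf.to_subtype
  obtain ⟨r, hr, rfl⟩ := (mem_span_image_iff_linearCombination ℤ).1 (by rwa [Set.image_id])
  have hsmall : #↥((⋃ i, ((prev i : G →₀ ℤ).support : Set G)) ∪ r.support) < #Z := by
    rw [hZ]
    exact (mk_union_le _ _).trans_lt (add_lt_of_lt hlam
      (Cardinal.mk_iUnion_lt_of_finite hlam hι fun i => (prev i : G →₀ ℤ).support.finite_toSet)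
      (r.support.finite_toSet.lt_aleph0.trans_le hlam))
  obtain ⟨x, hxZ, hxU⟩ := Cardinal.sdiff_nonempty_of_mk_lt_mk hsmall
  simp only [Set.mem_union, Set.mem_iUnion, Finset.mem_coe, Finsupp.mem_support_iff,
    not_or, not_exists, not_not] at hxU
  refine ⟨⟨r - single x 1, sub_mem hr (single_mem_supported ℤ 1 (hZY hxZ))⟩, fun i => ?_,
    ⟨x, hxZ, by simp⟩⟩
  by_contra hmeet
  refine hvU (Set.mem_iUnion.2 ⟨i, hY.mem_vadd_of_not_disjoint_sub_vadd hY2 (hZY hxZ) hr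
    (prev i).2 hxU.2 (hxU.1 i) hZY (hXp i) ?_⟩)
  simpa using hmeet

theorem exists_disjoint_vadd_and_mem (hY : IsIndependentSet Y)
    (hY2 : ∀ y ∈ Y, y + y ≠ 0) (hYinf : Y.Infinite) (hι : #ι < #Y)
    (prev : ι → supported ℤ ℤ Y) (Xp : ι → Set G) (hXp : ∀ i, Xp i ⊆ Y) {Z : Set G}
    (hZY : Z ⊆ Y) (v : Submodule.span ℤ Y) :
    ∃ f : supported ℤ ℤ Y, (∀ i,
      Disjoint (linearCombination ℤ id (f : G →₀ ℤ) +ᵥ Z)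
        (linearCombination ℤ id (prev i : G →₀ ℤ) +ᵥ Xp i)) ∧
      (#Z = #Y → (v : G) ∈ (⋃ i, linearCombination ℤ id (prev i : G →₀ ℤ) +ᵥ Xp i) ∪
        (linearCombination ℤ id (f : G →₀ ℤ) +ᵥ Z)) := by
  by_cases h : #Z = #Y ∧ (v : G) ∉ ⋃ i, linearCombination ℤ id (prev i : G →₀ ℤ) +ᵥ Xp i
  · obtain ⟨f, hdisj, hv⟩ :=
      hY.exists_disjoint_vadd_of_notMem hY2 hYinf hι prev Xp hXp hZY h.1 v.2 h.2
    exact ⟨f, hdisj, fun _ => Or.inr hv⟩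
  · obtain ⟨f, hdisj⟩ := hY.exists_disjoint_vadd hY2 hYinf hι prev Xp hXp hZY
    exact ⟨f, hdisj, fun hZ => Or.inl (not_not.1 fun hv => h ⟨hZ, hv⟩)⟩

theorem exists_tiles_span_of_wellFoundedLT {O : Type u} [LinearOrder O] [WellFoundedLT O]
    (hY : IsIndependentSet Y) (hY2 : ∀ y ∈ Y, y + y ≠ 0) (hYinf : Y.Infinite)
    (hO : ∀ o : O, #(Set.Iio o) < #Y) (X : O → Set G) (hXY : ∀ o, X o ⊆ Y)
    (target : O → Submodule.span ℤ Y)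
    (htarget : ∀ v, ∃ o, #(X o) = #Y ∧ target o = v) :
    ∃ σ : O → G, Tiles (fun o => σ o +ᵥ X o) (Submodule.span ℤ Y) := by
  -- stage `o` satisfies the conclusion of `exists_disjoint_vadd_and_mem` w.r.t. the stages `< o`
  obtain ⟨F, hF⟩ := exists_forall_of_wellFoundedLT _ fun o prev =>
    hY.exists_disjoint_vadd_and_mem hY2 hYinf (hO o) prev (fun i => X i) (fun i => hXY i)
      (hXY o) (target o)
  refine ⟨fun o => linearCombination ℤ id (F o : G →₀ ℤ), fun o o' hne => ?_, ?_⟩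
  · rcases hne.lt_or_gt with h | h
    · exact ((hF o').1 ⟨o, h⟩).symm
    · exact (hF o).1 ⟨o', h⟩
  refine subset_antisymm (Set.iUnion_subset fun o => ?_) fun v hv => ?_
  · rintro _ ⟨x, hx, rfl⟩
    refine add_mem ?_ (Submodule.subset_span (hXY o hx))
    simpa using (mem_span_image_iff_linearCombination ℤ (v := (id : G → G)) (s := Y)).2
      ⟨_, (F o).2, rfl⟩
  · obtain ⟨o, hbig, hov⟩ := htarget ⟨v, hv⟩
    rcases (hF o).2 hbig with hcov | hcov
    · obtain ⟨o', ho'⟩ := Set.mem_iUnion.1 hcov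
      exact Set.mem_iUnion.2 ⟨o', by simpa [hov] using ho'⟩
    · exact Set.mem_iUnion.2 ⟨o, by simpa [hov] using hcov⟩

theorem exists_tiles_span {J : Type u} (hY : IsIndependentSet Y) (hY2 : ∀ y ∈ Y, y + y ≠ 0)
    (hYinf : Y.Infinite) (hJ : #J = #Y)
    (X : J → Set G) (hXY : ∀ j, X j ⊆ Y) (hbig : #{j // #(X j) = #Y} = #Y) :
    ∃ σ : J → G, Tiles (fun j => σ j +ᵥ X j) (Submodule.span ℤ Y) := by
  obtain ⟨idx⟩ : Nonempty ((#J).ord.ToType ≃ J) := Cardinal.eq.1 (by simp)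
  obtain ⟨β⟩ : Nonempty ({j // #(X j) = #Y} ≃ Submodule.span ℤ Y) :=
    Cardinal.eq.1 (by simp [hbig, mk_span_int_eq hYinf])
  let emb : Submodule.span ℤ Y → (#J).ord.ToType := fun v => idx.symm (β.symm v)
  have hemb : emb.Injective := fun v w h =>
    β.symm.injective (Subtype.ext (by simpa [emb] using h))
  obtain ⟨σ, hσ⟩ := hY.exists_tiles_span_of_wellFoundedLT hY2 hYinf
    (fun o => by simpa [hJ] using mk_Iio_lt o) (X ∘ idx) (fun o => hXY _)
    (Function.invFun emb) fun v =>
      ⟨emb v, by simpa [emb] using (β.symm v).2, Function.leftInverse_invFun hemb v⟩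
  exact ⟨σ ∘ idx.symm, by simpa [Function.comp_def] using hσ.comp_equiv idx.symm⟩

end IsIndependentSet

theorem translates_partition_of_group_general {G I : Type} [AddCommGroup G]
    (Y : Set G) (hYinf : Y.Infinite) (hYind : IsIndependentSet Y)
    (hY2 : ∀ y ∈ Y, y + y ≠ 0)
    (hI : Cardinal.mk I = Cardinal.mk G)
    (X : I → Set G) (hXY : ∀ i, X i ⊆ Y)
    (hbig : Cardinal.mk {i : I // Cardinal.mk (X i) = Cardinal.mk Y} = Cardinal.mk I) :
    ∃ ρ : I → G, Pairwise (Function.onFun Disjoint (fun i => (fun x => ρ i + x) '' X i)) ∧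
      (⋃ i, (fun x => ρ i + x) '' X i) = Set.univ := by
  let H := (Submodule.span ℤ Y).toAddSubgroup
  have : Infinite Y := hYinf.to_subtype
  have hG : #G = #(G ⧸ H) * #Y := by
    rw [mk_congr H.addGroupEquivQuotientProdAddSubgroup, mk_prod, lift_id, lift_id]
    exact congrArg _ (mk_span_int_eq hYinf)
  obtain ⟨c, hc⟩ := exists_fibers_mk_eq _ (hI.trans hG) hbig
  have hfiber (q : G ⧸ H) : ∃ σ : {i // c i = q} → G,
      Tiles (fun j => σ j +ᵥ X j) (Submodule.span ℤ Y) :=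
    hYind.exists_tiles_span hY2 hYinf (hc q).1 _ (fun j => hXY j) (hc q).2
  choose σ hσ using hfiber
  have htiles : Tiles (fun i => ((c i).out + σ (c i) ⟨i, rfl⟩) +ᵥ X i) Set.univ := by
    refine Tiles.of_fibers ((↑) : G → G ⧸ H) c fun q => ?_
    have hρ : ∀ j : {i // c i = q}, (c j).out + σ (c j) ⟨j, rfl⟩ = q.out + σ q j := by
      rintro ⟨i, rfl⟩
      rfl
    simp only [hρ, ← vadd_vadd]
    rw [QuotientAddGroup.preimage_mk_singleton]
    exact (hσ q).vadd q.out
  exact ⟨_, htiles⟩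

theorem translates_partition_of_group {G I : Type} [AddCommGroup G]
    (Y : Set G) (hYinf : Y.Infinite) (hYind : IsIndependentSet Y)
    (hY2 : ∀ y ∈ Y, y + y ≠ 0)
    (hI : Cardinal.mk I = Cardinal.mk G)
    (X : I → Set G) (hXY : ∀ i, X i ⊆ Y) (hXne : ∀ i, (X i).Nonempty)
    (hbig : Cardinal.mk {i : I // Cardinal.mk (X i) = Cardinal.mk Y} = Cardinal.mk I) :
    ∃ ρ : I → G, Pairwise (Function.onFun Disjoint (fun i => (fun x => ρ i + x) '' X i)) ∧
      (⋃ i, (fun x => ρ i + x) '' X i) = Set.univ :=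
  translates_partition_of_group_general Y hYinf hYind hY2 hI X hXY hbig
end

section
/- Let G be an abelian group, A and B subsets of an independent set Y ⊆ G with no elements of order 2, and θ ∈ G with θ ∉ B. Then there are at most 3 elements t ∈ G with θ ∈ t + A and (t + A) ∩ B ≠ ∅. -/
/-!
A bad translate `t` comes with `aₜ, aₜ' ∈ A` and `bₜ ∈ B` such that `θ = t + aₜ` and
`bₜ = t + aₜ'`, so `θ = aₜ - aₜ' + bₜ`. Comparing these expressions for two bad translates `s ≠ t`
gives the relation `aₜ + bₜ + aₛ' = aₛ + bₛ + aₜ'` between elements of `Y`. By independence the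
coefficient `c` of `aₜ` in it satisfies `c • aₜ = 0`; if `aₜ` cancelled against neither `aₛ'` nor a
right-hand term, then `c ∈ {1, 2}`, impossible since `0 ∉ Y` and `Y` has no element of order 2.
As `aₜ ≠ aₛ`, and `aₜ ≠ aₜ'` because `θ ∉ B`, this leaves `aₜ ∈ {aₛ', bₛ}`. So `t ↦ θ - t = aₜ`
injects the bad translates into `{aₛ, aₛ', bₛ}`.
-/

open Finsupp

section

variable {G : Type*} [AddCommGroup G] {Y : Set G}

theorem IsIndependentSet.zsmul_eq_zero (hY : IsIndependentSet Y) {f : G →₀ ℤ}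
    (hf : f ∈ supported ℤ ℤ Y) (hsum : linearCombination ℤ id f = 0) (x : G) : f x • x = 0 := by
  by_cases hx : x ∈ f.support
  · exact hY.2 f ((mem_supported ℤ f).1 hf) (by rwa [linearCombination_apply] at hsum) x hx
  · rw [notMem_support_iff.1 hx, zero_smul]

theorem IsIndependentSet.eq_or_eq_of_add_add_eq (hY : IsIndependentSet Y)
    (hY2 : ∀ y ∈ Y, y + y ≠ 0) {x y z u v w : G} (hx : x ∈ Y) (hy : y ∈ Y) (hz : z ∈ Y)
    (hu : u ∈ Y) (hv : v ∈ Y) (hw : w ∈ Y) (h : x + y + z = u + v + w) :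
    x = z ∨ x = u ∨ x = v ∨ x = w := by
  by_contra! hne
  obtain ⟨hxz, hxu, hxv, hxw⟩ := hne
  set f : G →₀ ℤ := single x 1 + single y 1 + single z 1 - single u 1 - single v 1 - single w 1
  have hf : f ∈ supported ℤ ℤ Y := by
    have hsingle := fun {g} (hg : g ∈ Y) => single_mem_supported ℤ (1 : ℤ) hg
    exact sub_mem (sub_mem (sub_mem (add_mem (add_mem (hsingle hx) (hsingle hy)) (hsingle hz))
      (hsingle hu)) (hsingle hv)) (hsingle hw)
  have hsum : linearCombination ℤ id f = 0 := by
    simp only [f, map_add, map_sub, linearCombination_single, one_smul, id_eq, h]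
    abel
  have hcoef := hY.zsmul_eq_zero hf hsum x
  have hfx : f x = 1 + single y 1 x := by
    simp only [f, coe_add, coe_sub, Pi.add_apply, Pi.sub_apply, single_eq_same,
      single_eq_of_ne' hxz.symm, single_eq_of_ne' hxu.symm, single_eq_of_ne' hxv.symm,
      single_eq_of_ne' hxw.symm]
    abel
  by_cases hyx : y = x
  · rw [hfx, hyx, single_eq_same, show (1 + 1 : ℤ) = 2 from rfl, two_zsmul] at hcoef
    exact hY2 x hx hcoef
  · rw [hfx, single_eq_of_ne' hyx, add_zero, one_zsmul] at hcoef
    exact hY.1 (hcoef ▸ hx)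

theorem IsIndependentSet.sub_mem_of_bad_translate (hY : IsIndependentSet Y)
    (hY2 : ∀ y ∈ Y, y + y ≠ 0) {A B : Set G} (hA : A ⊆ Y) (hB : B ⊆ Y) {θ : G} (hθ : θ ∉ B)
    {s a a' t : G} (ha : a ∈ A) (ha' : a' ∈ A) (hb : s + a' ∈ B) (hs : s + a = θ)
    (ht : θ ∈ (fun a => t + a) '' A ∧ (((fun a => t + a) '' A) ∩ B).Nonempty) :
    θ - t ∈ ({a, a', s + a'} : Set G) := by
  obtain ⟨⟨aₜ, haₜ, htθ : t + aₜ = θ⟩, _, ⟨aₜ', haₜ', rfl⟩, hbₜ : t + aₜ' ∈ B⟩ := ht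
  rw [← htθ, add_sub_cancel_left]
  have hrel : aₜ + (t + aₜ') + a' = a + (s + a') + aₜ' := by
    rw [show aₜ + (t + aₜ') + a' = t + aₜ + aₜ' + a' by abel,
      show a + (s + a') + aₜ' = s + a + aₜ' + a' by abel, htθ, hs]
  rcases hY.eq_or_eq_of_add_add_eq hY2 (hA haₜ) (hB hbₜ) (hA ha') (hA ha) (hB hb) (hA haₜ')
    hrel with h | h | h | h
  · exact .inr (.inl h)
  · exact .inl h
  · exact .inr (.inr h)
  · rw [← h, htθ] at hbₜ
    exact absurd hbₜ hθ

end

theorem at_most_three_bad_translates {G : Type*} [AddCommGroup G]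
    (Y : Set G) (hYind : IsIndependentSet Y) (hY2 : ∀ y ∈ Y, y + y ≠ 0)
    (A B : Set G) (hA : A ⊆ Y) (hB : B ⊆ Y) (θ : G) (hθ : θ ∉ B) :
    Cardinal.mk {t : G // θ ∈ (fun a => t + a) '' A ∧
      (((fun a => t + a) '' A) ∩ B).Nonempty} ≤ 3 := by
  rcases isEmpty_or_nonempty {t : G // θ ∈ (fun a => t + a) '' A ∧
      (((fun a => t + a) '' A) ∩ B).Nonempty} with hempty | ⟨s, ⟨a, ha, hs⟩, _, ⟨a', ha', rfl⟩, hb⟩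
  · rw [Cardinal.mk_eq_zero]
    norm_num
  classical
  calc _ ≤ Cardinal.mk ({a, a', s + a'} : Finset G) :=
        Cardinal.mk_le_of_injective (f := fun t => ⟨θ - t.1,
          by simpa using hYind.sub_mem_of_bad_translate hY2 hA hB hθ ha ha' hb hs t.2⟩)
          fun t t' h => Subtype.ext (sub_right_injective (congrArg Subtype.val h))
    _ = (({a, a', s + a'} : Finset G).card : Cardinal) := Cardinal.mk_coe_finset
    _ ≤ 3 := by exact_mod_cast Finset.card_le_three
end

section
/- Let G be an abelian group and A a subset of an independent set Y ⊆ G with no elements of order 2. Then for every θ ∈ G, the set of translates {t + A : t ∈ G, θ ∈ t + A} has cardinality |A|. -/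
/-!
A translate `t + A` contains `θ` exactly when `t = θ - a` for some `a ∈ A`, so `a ↦ (θ - a) + A`
maps `A` onto the translates in question. It is injective: if `(θ - a) + A = (θ - b) + A`, then
`θ - a + b = θ - b + y` for some `y ∈ A`, i.e. `a + y = b + b`. For distinct `a, b, y` this is a
nontrivial relation `a + y - 2b = 0` in `Y`; for `a = y ≠ b` it is `2a - 2b = 0`, which would force
`2a = 0`. Hence `a = b`.
-/

section

variable {G : Type*} [AddCommGroup G]

namespace IsIndependentSet

theorem mono {Y Z : Set G} (hY : IsIndependentSet Y) (hZ : Z ⊆ Y) : IsIndependentSet Z :=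
  ⟨fun h => hY.1 (hZ h), fun f hf => hY.2 f (hf.trans hZ)⟩

theorem smul_eq_zero_of_sum_eq_zero {Y : Set G} (hY : IsIndependentSet Y)
    {s : Finset G} (hs : ↑s ⊆ Y) (c : G → ℤ) (h : ∑ x ∈ s, c x • x = 0) :
    ∀ x ∈ s, c x • x = 0 := by
  classical
  intro x hx
  let f : G →₀ ℤ := Finsupp.onFinset s (fun x => if x ∈ s then c x else 0)
    (fun x hx => by by_contra h; simp [h] at hx)
  have hf : ∀ x ∈ s, f x = c x := fun x hx => by simp [f, hx]
  by_cases hcx : c x = 0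
  · simp [hcx]
  have hsum : (f.sum fun x k => k • x) = 0 := by
    rw [Finsupp.onFinset_sum (g := fun x k => k • x) _ (fun _ => zero_smul ℤ _), ← h]
    exact Finset.sum_congr rfl fun y hy => by simp [hy]
  have hsupp : ↑f.support ⊆ Y := fun y hy => hs (Finsupp.support_onFinset_subset hy)
  rw [← hf x hx]
  exact hY.2 f hsupp hsum x (by simp [hf x hx, hcx])

theorem eq_of_add_eq_add_self {Y : Set G} (hY : IsIndependentSet Y)
    (hY2 : ∀ y ∈ Y, y + y ≠ 0) {a b y : G} (ha : a ∈ Y) (hb : b ∈ Y) (hy : y ∈ Y)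
    (h : a + y = b + b) : a = b := by
  classical
  by_contra hab
  by_cases hyb : y = b
  · exact hab (add_right_cancel (h.trans (by rw [hyb])))
  by_cases hay : a = y
  · subst hay
    have hrel : ∑ x ∈ {a, b}, (if x = a then 2 else -2 : ℤ) • x = 0 := by
      rw [Finset.sum_pair hab, if_pos rfl, if_neg (Ne.symm hab), two_smul, h]
      simp [two_smul]
    have := hY.smul_eq_zero_of_sum_eq_zero (by simp [Set.insert_subset_iff, ha, hb]) _ hrel a
      (by simp)
    exact hY2 a ha (by simpa [two_smul] using this)
  · have hrel : ∑ x ∈ {a, y, b}, (if x = b then -2 else 1 : ℤ) • x = 0 := by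
      rw [Finset.sum_insert (by simp [hay, hab]), Finset.sum_pair hyb, if_neg hab, if_neg hyb,
        if_pos rfl, one_smul, one_smul, ← add_assoc, h]
      simp [two_smul]
    have := hY.smul_eq_zero_of_sum_eq_zero (by simp [Set.insert_subset_iff, ha, hb, hy]) _ hrel a
      (by simp)
    rw [if_neg hab, one_smul] at this
    exact hY.1 (this ▸ ha)

theorem eq_of_image_add_left_eq {A : Set G} (hA : IsIndependentSet A)
    (hA2 : ∀ y ∈ A, y + y ≠ 0) (c : G) {a b : G} (ha : a ∈ A) (hb : b ∈ A)
    (h : (fun x => c - a + x) '' A = (fun x => c - b + x) '' A) : a = b := by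
  obtain ⟨y, hy, hyab⟩ : c - a + b ∈ (fun x => c - b + x) '' A := h ▸ ⟨b, hb, rfl⟩
  refine hA.eq_of_add_eq_add_self hA2 ha hb hy ?_
  have : c - b + y = c - a + b := hyab
  linear_combination (norm := abel) this

end IsIndependentSet

theorem translates_containing_eq_range (A : Set G) (θ : G) :
    {T : Set G | (∃ t : G, T = (fun a => t + a) '' A) ∧ θ ∈ T} =
      Set.range fun a : A => (fun x => θ - a + x) '' A := by
  ext T
  constructor
  · rintro ⟨⟨t, rfl⟩, a, ha, hθ⟩
    subst hθ
    exact ⟨⟨a, ha⟩, by simp only [add_sub_cancel_right]⟩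
  · rintro ⟨a, rfl⟩
    exact ⟨⟨_, rfl⟩, a, a.2, sub_add_cancel θ a⟩

end

theorem card_of_translates_containing_point {G : Type*} [AddCommGroup G]
    (Y : Set G) (hYind : IsIndependentSet Y) (hY2 : ∀ y ∈ Y, y + y ≠ 0)
    (A : Set G) (hA : A ⊆ Y) (θ : G) :
    Cardinal.mk {T : Set G // (∃ t : G, T = (fun a => t + a) '' A) ∧ θ ∈ T} =
      Cardinal.mk A := by
  have hinj : Function.Injective fun a : A => (fun x => θ - a + x) '' A :=
    fun a b h => Subtype.ext <|
      (hYind.mono hA).eq_of_image_add_left_eq (fun y hy => hY2 y (hA hy)) θ a.2 b.2 h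
  change Cardinal.mk ↥{T : Set G | (∃ t : G, T = (fun a => t + a) '' A) ∧ θ ∈ T} = _
  rw [translates_containing_eq_range, Cardinal.mk_range_eq _ hinj]
end

section
/- For every cardinal κ with 2 ≤ κ ≤ 2^ℵ₀, the real line can be partitioned into exactly κ pairwise homeomorphic Bernstein sets. -/
/-- A Bernstein set in ℝ: neither it nor its complement contains an uncountable closed set. -/
def IsBernsteinR (B : Set ℝ) : Prop :=
  ∀ F : Set ℝ, IsClosed F → ¬F.Countable → ¬F ⊆ B ∧ ¬F ⊆ Bᶜ

/-!
By transfinite recursion of length `𝔠`, pick for every uncountable closed `F ⊆ ℝ` and every `y`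
in a `ℚ`-vector space `W` with `#W ≤ 𝔠` a point `x_(F,y) ∈ F` outside the `ℚ`-span of the earlier
ones: `F` has `𝔠` points, while an initial segment spans fewer. These points are linearly
independent, so a `ℚ`-linear `φ : ℝ → W` sends each `x_(F,y)` to `y`; thus `φ` is onto on every
uncountable closed set. The fibres of `φ` (for `#W = κ` infinite), or of `⌊φ⌋ mod κ` (for `W = ℝ`
and `κ` finite), therefore meet every uncountable closed set without containing it, and
translations of `ℝ` carry any fibre onto any other.
-/

open Cardinal Set Function Submodule

theorem linearIndependent_of_notMem_span_image_Iio {ι K V : Type*} [LinearOrder ι]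
    [DivisionRing K] [AddCommGroup V] [Module K V] {v : ι → V}
    (hv : ∀ i, v i ∉ span K (v '' Iio i)) :
    LinearIndependent K v := by
  classical
  rw [← linearIndepOn_univ_iff]
  refine linearIndepOn_of_finite _ ?_
  rintro t - ht
  lift t to Finset ι using ht
  induction t using Finset.induction_on_max with
  | empty => simp
  | insert a s hlt ih =>
    rw [Finset.coe_insert]
    exact ih.insert fun h => hv a (span_mono (image_mono fun x hx => hlt x hx) h)

theorem exists_linearIndependent_forall_mem {ι K V : Type*} [LinearOrder ι] [WellFoundedLT ι]
    [DivisionRing K] [AddCommGroup V] [Module K V] (F : ι → Set V)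
    (hF : ∀ i (f : Iio i → V), ¬F i ⊆ span K (range f)) :
    ∃ v : ι → V, LinearIndependent K v ∧ ∀ i, v i ∈ F i := by
  choose pick hpick_mem hpick_span using fun i (f : Iio i → V) => not_subset.mp (hF i f)
  let v : ι → V := wellFounded_lt.fix fun i rec => pick i fun j => rec j j.2
  have hv : ∀ i, v i = pick i fun j => v j := wellFounded_lt.fix_eq _
  refine ⟨v, linearIndependent_of_notMem_span_image_Iio fun i => ?_,
    fun i => hv i ▸ hpick_mem _ _⟩
  rw [image_eq_range, hv i]
  exact hpick_span _ _

theorem LinearIndependent.exists_linearMap_apply_eq {ι K V W : Type*} [DivisionRing K]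
    [AddCommGroup V] [Module K V] [AddCommGroup W] [Module K W] {v : ι → V}
    (hv : LinearIndependent K v) (w : ι → W) : ∃ f : V →ₗ[K] W, ∀ i, f (v i) = w i := by
  obtain ⟨f, hf⟩ := LinearMap.exists_extend ((Finsupp.linearCombination K w).comp hv.repr)
  refine ⟨f, fun i => ?_⟩
  have hvi : v i ∈ span K (range v) := subset_span (mem_range_self i)
  simpa [hv.repr_eq_single i ⟨v i, hvi⟩ rfl] using LinearMap.congr_fun hf ⟨v i, hvi⟩

theorem mk_span_rat_le {E : Type} [Field E] [CharZero E] (s : Set E) :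
    #(span ℚ s) ≤ max #s ℵ₀ :=
  calc #(span ℚ s) ≤ #(IntermediateField.adjoin ℚ s) :=
        mk_le_mk_of_subset
          ((span_le (p := (IntermediateField.adjoin ℚ s).toSubalgebra.toSubmodule)).mpr
            (IntermediateField.subset_adjoin ℚ s))
    _ ≤ max (max #ℚ #s) ℵ₀ := IntermediateField.cardinalMk_adjoin_le ℚ s
    _ = max #s ℵ₀ := by rw [Cardinal.mkRat, max_comm ℵ₀, max_assoc, max_self]

theorem not_subset_span_rat_of_mk_lt {E : Type} [Field E] [CharZero E] {s F : Set E}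
    (hs : #s < #F) (hF : ℵ₀ < #F) : ¬F ⊆ span ℚ s := fun hsub =>
  ((mk_le_mk_of_subset hsub).trans (mk_span_rat_le s)).not_gt (max_lt hs hF)

theorem mk_setOf_isClosed_le_continuum (X : Type*) [TopologicalSpace X]
    [SecondCountableTopology X] : #{F : Set X | IsClosed F} ≤ 𝔠 := by
  obtain ⟨b, hbc, -, hb⟩ := TopologicalSpace.exists_countable_basis X
  have hborel := hb.borel_eq_generateFrom
  borelize X
  calc #{F : Set X | IsClosed F}
    _ ≤ #{F : Set X | @MeasurableSet X (MeasurableSpace.generateFrom b) F} :=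
        mk_le_mk_of_subset fun F hF => hborel ▸ hF.measurableSet
    _ ≤ 𝔠 := MeasurableSpace.cardinal_measurableSet_le_continuum
        (hbc.le_aleph0.trans aleph0_le_continuum)

theorem continuum_le_mk_of_isClosed_of_not_countable {X : Type} [TopologicalSpace X]
    [PolishSpace X] {F : Set X} (hF : IsClosed F) (hF' : ¬F.Countable) : 𝔠 ≤ #F := by
  obtain ⟨f, hfF, -, hf⟩ := hF.exists_nat_bool_injection_of_not_countable hF'
  calc 𝔠 = #(ℕ → Bool) := by simp
    _ ≤ #F := mk_le_of_injective (f := fun g => ⟨f g, hfF (mem_range_self g)⟩)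
        fun a b hab => hf (congrArg Subtype.val hab)

def SurjOnUncountableClosed {X β : Type*} [TopologicalSpace X] (f : X → β) : Prop :=
  ∀ F : Set X, IsClosed F → ¬F.Countable → SurjOn f F univ

theorem SurjOnUncountableClosed.surjective {X β : Type*} [TopologicalSpace X] [Uncountable X]
    {f : X → β} (hf : SurjOnUncountableClosed f) : Surjective f :=
  (hf Set.univ isClosed_univ not_countable_univ).surjective

theorem SurjOnUncountableClosed.comp {X β γ : Type*} [TopologicalSpace X] {f : X → β}
    {g : β → γ} (hf : SurjOnUncountableClosed f) (hg : Surjective g) :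
    SurjOnUncountableClosed (g ∘ f) :=
  fun F hF hF' => hg.surjOn.comp (hf F hF hF')

theorem SurjOnUncountableClosed.isBernsteinR_preimage {β : Type*} {f : ℝ → β}
    (hf : SurjOnUncountableClosed f) {S : Set β} (hS : S.Nonempty) (hSc : Sᶜ.Nonempty) :
    IsBernsteinR (f ⁻¹' S) := fun F hF hF' => by
  obtain ⟨x, hxF, hx⟩ := hf F hF hF' (mem_univ hSc.some)
  obtain ⟨y, hyF, hy⟩ := hf F hF hF' (mem_univ hS.some)
  exact ⟨fun h => hSc.some_mem (hx ▸ h hxF),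
    fun h => h hyF (mem_preimage.mpr (hy ▸ hS.some_mem))⟩

theorem exists_linearMap_surjOnUncountableClosed (W : Type) [AddCommGroup W] [Module ℚ W]
    (hW : #W ≤ 𝔠) : ∃ φ : ℝ →ₗ[ℚ] W, SurjOnUncountableClosed φ := by
  let Target := {F : Set ℝ // IsClosed F ∧ ¬F.Countable} × W
  have hTarget : #Target ≤ 𝔠 := by
    rw [mk_prod, lift_id, lift_id]
    calc #{F : Set ℝ // IsClosed F ∧ ¬F.Countable} * #W ≤ 𝔠 * 𝔠 :=
          mul_le_mul' ((mk_subtype_mono fun F hF => hF.1).trans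
            (mk_setOf_isClosed_le_continuum ℝ)) hW
      _ = 𝔠 := mul_eq_self aleph0_le_continuum
  -- enumerate the targets in order type `ord #Target`, so that every initial segment is small
  obtain ⟨_, _, hord⟩ := exists_ord_eq_type_lt Target
  have hlarge (t : Target) : 𝔠 ≤ #t.1.1 :=
    continuum_le_mk_of_isClosed_of_not_countable t.1.2.1 t.1.2.2
  obtain ⟨v, hv, hvF⟩ :=
    exists_linearIndependent_forall_mem (K := ℚ) (fun t : Target => t.1.1)
      fun t f => not_subset_span_rat_of_mk_lt
        (mk_range_le.trans_lt ((mk_Iio_lt t hord).trans_le (hTarget.trans (hlarge t))))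
        (aleph0_lt_continuum.trans_le (hlarge t))
  obtain ⟨φ, hφ⟩ := hv.exists_linearMap_apply_eq fun t : Target => t.2
  exact ⟨φ, fun F hF hF' y _ => ⟨_, hvF (⟨F, hF, hF'⟩, y), hφ _⟩⟩

def ShiftsByTranslation {G H : Type*} [Add G] [Add H] (g : G → H) : Prop :=
  ∀ d : H, ∃ r : G, ∀ x, g (x + r) = g x + d

namespace ShiftsByTranslation

variable {G H K : Type*}

theorem of_addMonoidHom [AddZeroClass G] [AddZeroClass H] {f : G →+ H} (hf : Surjective f) :
    ShiftsByTranslation f := fun d =>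
  (hf d).imp fun r hr x => by rw [map_add, hr]

theorem comp [Add G] [Add H] [Add K] {g : H → K} {f : G → H} (hg : ShiftsByTranslation g)
    (hf : ShiftsByTranslation f) : ShiftsByTranslation (g ∘ f) := fun d => by
  obtain ⟨r, hr⟩ := hg d
  obtain ⟨s, hs⟩ := hf r
  exact ⟨s, fun x => by simp only [comp_apply, hs, hr]⟩

theorem surjective [Add G] [Nonempty G] [AddGroup H] {g : G → H}
    (hg : ShiftsByTranslation g) : Surjective g := fun y => by
  obtain ⟨x⟩ := ‹Nonempty G›
  obtain ⟨r, hr⟩ := hg (-g x + y)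
  exact ⟨x + r, by rw [hr, add_neg_cancel_left]⟩

theorem nonempty_homeomorph_fiber [TopologicalSpace G] [AddGroup G] [ContinuousAdd G]
    [AddGroup H] {g : G → H} (hg : ShiftsByTranslation g) (i j : H) :
    Nonempty (g ⁻¹' {i} ≃ₜ g ⁻¹' {j}) := by
  obtain ⟨r, hr⟩ := hg (-i + j)
  have : Homeomorph.addRight r '' (g ⁻¹' {i}) = g ⁻¹' {j} := by
    ext y
    have key : g y = g (y + -r) + (-i + j) := by rw [← hr, neg_add_cancel_right]
    rw [Homeomorph.image_eq_preimage_symm, Homeomorph.addRight_symm]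
    simp only [mem_preimage, Homeomorph.coe_addRight, mem_singleton_iff, key, ← add_assoc]
    exact add_neg_eq_zero.symm.trans add_eq_right.symm
  exact ⟨((Homeomorph.addRight r).image _).trans (.setCongr this)⟩

end ShiftsByTranslation

theorem shiftsByTranslation_intCast_floor (n : ℕ) :
    ShiftsByTranslation fun x : ℝ => ((⌊x⌋ : ℤ) : ZMod n) := fun d => by
  obtain ⟨c, rfl⟩ := ZMod.intCast_surjective d
  exact ⟨c, fun x => by simp⟩

theorem exists_homeomorphic_bernstein_partition {H : Type} [AddGroup H] [Nontrivial H]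
    {h : ℝ → H} (hsurj : SurjOnUncountableClosed h) (hshift : ShiftsByTranslation h) :
    ∃ P : Set (Set ℝ), #P = #H ∧ P.PairwiseDisjoint id ∧ ⋃₀ P = Set.univ ∧
      (∀ B ∈ P, IsBernsteinR B) ∧ ∀ A ∈ P, ∀ B ∈ P, Nonempty (A ≃ₜ B) := by
  refine ⟨range fun i => h ⁻¹' {i},
    mk_range_eq _ ((preimage_injective.mpr hsurj.surjective).comp singleton_injective),
    (pairwise_disjoint_fiber h).range_pairwise, ?_, ?_, ?_⟩
  · rw [sUnion_range, ← preimage_iUnion, iUnion_of_singleton, preimage_univ]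
  · rintro _ ⟨i, rfl⟩
    obtain ⟨j, hj⟩ := exists_ne i
    exact hsurj.isBernsteinR_preimage (singleton_nonempty i) ⟨j, hj⟩
  · rintro _ ⟨i, rfl⟩ _ ⟨j, rfl⟩
    exact hshift.nonempty_homeomorph_fiber i j

theorem partition_into_kappa_homeomorphic_bernstein_sets (κ : Cardinal)
    (h2 : 2 ≤ κ) (hc : κ ≤ Cardinal.continuum) :
    ∃ P : Set (Set ℝ), Cardinal.mk P = κ ∧ P.PairwiseDisjoint id ∧ ⋃₀ P = Set.univ ∧
      (∀ B ∈ P, IsBernsteinR B) ∧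
      ∀ A ∈ P, ∀ B ∈ P, Nonempty (↥A ≃ₜ ↥B) := by
  rcases lt_or_ge κ ℵ₀ with hfin | hinf
  · obtain ⟨n, rfl⟩ := lt_aleph0.mp hfin
    -- `ℝ` is divisible, so it has no nontrivial finite quotient: use `⌊φ x⌋ mod n` instead
    have : Fact (1 < n) := ⟨by exact_mod_cast h2⟩
    obtain ⟨φ, hφ⟩ := exists_linearMap_surjOnUncountableClosed ℝ mk_real.le
    have hfloor := shiftsByTranslation_intCast_floor n
    simpa using exists_homeomorphic_bernstein_partition (hφ.comp hfloor.surjective)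
      (hfloor.comp (.of_addMonoidHom (f := φ.toAddMonoidHom) hφ.surjective))
  · have : Nonempty κ.out :=
      mk_ne_zero_iff.mp ((mk_out κ).trans_ne (zero_lt_two.trans_le h2).ne')
    have hW : #(κ.out →₀ ℚ) = κ := by
      rw [mk_finsupp_of_infinite', mk_out, Cardinal.mkRat, max_eq_left hinf]
    obtain ⟨φ, hφ⟩ := exists_linearMap_surjOnUncountableClosed _ (hW.trans_le hc)
    rw [← hW]
    exact exists_homeomorphic_bernstein_partition hφ
      (.of_addMonoidHom (f := φ.toAddMonoidHom) hφ.surjective)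
end

section
/- Let P be an uncountable Polish abelian topological group with only countably many elements of finite order (or the Cantor group), κ an infinite cardinal with 2^κ > 2^ℵ₀, and L a translation-invariant σ-ideal such that every nonempty open set contains a member of L of size κ. Then P can be partitioned into 2^ℵ₀ mutually non-homeomorphic κ-dense sets all lying in L. -/
/-!
Since `#P = 𝔠`, enumerate `P` as `(x i)` along the initial ordinal of `𝔠`. First choose pairwise
disjoint cores `B i ∪ Z i ∈ L` with `B i` `κ`-dense, `#(Z i) = κ`, avoiding every `x j` with
`j ≤ i`: for `κ < 𝔠` take translates of one `κ`-dense `D ∈ L`, moved off fewer than `𝔠` points;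
for `κ = 𝔠` split a `𝔠`-dense member of `L` into `𝔠` disjoint `𝔠`-dense sets. Then by recursion
the `i`-th piece is `B i ∪ S`, plus `x i` if it is not yet covered, where `S ⊆ Z i` is chosen so
that the piece is homeomorphic to no earlier one: the `2 ^ κ > 𝔠` choices of `S` give distinct
sets, while a separable subspace is homeomorphic to at most `𝔠` subsets of `P`.
-/

/-- The discrete topology on `ZMod 3`. -/
instance : TopologicalSpace (ZMod 3) := ⊥

/-- The Cantor group: countable power of the 3-element group, with the product topology. -/
abbrev CantorGroup : Type := ℕ → ZMod 3

/-- `S` is `κ`-dense: it meets every nonempty open set in exactly `κ` points. -/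
def IsKappaDense {P : Type*} [TopologicalSpace P] (κ : Cardinal) (S : Set P) : Prop :=
  ∀ U : Set P, IsOpen U → U.Nonempty → Cardinal.mk ↥(S ∩ U) = κ

open Cardinal Set Function
open scoped Pointwise

universe u

theorem exists_transfinite_choice {ι σ : Type*} [Preorder ι] [WellFoundedLT ι]
    (C : ∀ i : ι, (Iio i → σ) → Set σ) (hC : ∀ i g, (C i g).Nonempty) :
    ∃ f : ι → σ, ∀ i, f i ∈ C i fun j => f j := by
  let f : ι → σ := wellFounded_lt.fix fun i rec => (hC i fun j => rec j j.2).some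
  refine ⟨f, fun i => ?_⟩
  rw [show f i = _ from wellFounded_lt.fix_eq _ i]
  exact Nonempty.some_mem _

theorem Cardinal.mk_sdiff_eq_of_mk_lt {α : Type u} {S T : Set α} (hS : ℵ₀ ≤ #S)
    (h : #T < #S) : #(S \ T : Set α) = #S := by
  refine (mk_le_mk_of_subset sdiff_subset).antisymm ?_
  by_contra! hlt
  exact (le_mk_sdiff_add_mk S T).not_gt (add_lt_of_lt hS hlt h)

theorem mk_eq_continuum_of_polishSpace (P : Type u) [TopologicalSpace P] [PolishSpace P]
    [Uncountable P] : #P = 𝔠 := by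
  borelize P
  simpa using
    mk_congr_lift (PolishSpace.measurableEquivNatBoolOfNotCountable not_countable).toEquiv

theorem mk_continuous_le_continuum {Y X : Type u} [TopologicalSpace Y]
    [TopologicalSpace.SeparableSpace Y] [TopologicalSpace X] [T2Space X] (hX : #X ≤ 𝔠) :
    #{f : Y → X // Continuous f} ≤ 𝔠 := by
  obtain ⟨s, hs, hsd⟩ := TopologicalSpace.exists_countable_dense Y
  have : Countable s := hs.to_subtype
  calc #{f : Y → X // Continuous f} ≤ #(s → X) :=
        mk_le_of_injective (f := fun f x => f.1 x) fun f g h =>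
          Subtype.ext (Continuous.ext_on hsd f.2 g.2 fun x hx => congrFun h ⟨x, hx⟩)
    _ = #X ^ #s := by simp
    _ ≤ 𝔠 ^ ℵ₀ :=
        (power_le_power_right hX).trans (power_le_power_left continuum_ne_zero mk_le_aleph0)
    _ = 𝔠 := continuum_power_aleph0

theorem mk_setOf_nonempty_homeomorph_le_continuum {X : Type u} [TopologicalSpace X] [T2Space X]
    [SecondCountableTopology X] (hX : #X ≤ 𝔠) (Q : Set X) :
    #{B : Set X | Nonempty (Q ≃ₜ B)} ≤ 𝔠 := by
  let embed (B : {B : Set X | Nonempty (Q ≃ₜ B)}) : {f : Q → X // Continuous f} :=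
    ⟨(↑) ∘ B.2.some, continuous_subtype_val.comp B.2.some.continuous⟩
  have hrange (B) : range (embed B).1 = B := by simp [embed, range_comp]
  refine (mk_le_of_injective (f := embed) fun B B' h => ?_).trans (mk_continuous_le_continuum hX)
  exact Subtype.ext (by rw [← hrange B, ← hrange B', h])

theorem exists_forall_isEmpty_homeomorph {X : Type u} [TopologicalSpace X] [T2Space X]
    [SecondCountableTopology X] (hX : #X ≤ 𝔠) {J : Type u} (hJ : #J ≤ 𝔠) (g : J → Set X)
    {α : Type u} (hα : 𝔠 < #α) {Φ : α → Set X} (hΦ : Injective Φ) :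
    ∃ a, ∀ j, IsEmpty (g j ≃ₜ Φ a) := by
  have hbad : #(Φ ⁻¹' ⋃ j, {B : Set X | Nonempty (g j ≃ₜ B)}) < #α :=
    calc _ ≤ #(⋃ j, {B : Set X | Nonempty (g j ≃ₜ B)}) := mk_preimage_of_injective _ _ hΦ
      _ ≤ #J * ⨆ j, #{B : Set X | Nonempty (g j ≃ₜ B)} := mk_iUnion_le _
      _ ≤ 𝔠 * 𝔠 :=
          mul_le_mul' hJ (ciSup_le' fun j => mk_setOf_nonempty_homeomorph_le_continuum hX _)
      _ < #α := by rwa [mul_eq_self aleph0_le_continuum]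
  obtain ⟨a, ha⟩ := compl_nonempty_of_mk_lt_mk hbad
  exact ⟨a, fun j => not_nonempty_iff.1 fun h => ha (mem_iUnion.2 ⟨j, h⟩)⟩

namespace IsKappaDense

variable {P Q : Type u} [TopologicalSpace P] [TopologicalSpace Q] {κ : Cardinal.{u}}
  {S T : Set P}

theorem mk_eq [Nonempty P] (hS : IsKappaDense κ S) : #S = κ := by
  simpa using hS univ isOpen_univ univ_nonempty

theorem nonempty [Nonempty P] (hS : IsKappaDense κ S) (hκ : κ ≠ 0) : S.Nonempty := by
  rw [← nonempty_coe_sort, ← mk_ne_zero_iff, hS.mk_eq]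
  exact hκ

theorem mono (hS : IsKappaDense κ S) (hST : S ⊆ T) (hT : #T ≤ κ) : IsKappaDense κ T :=
  fun U hU hne => ((mk_le_mk_of_subset inter_subset_left).trans hT).antisymm <|
    (hS U hU hne).symm.le.trans (mk_le_mk_of_subset (inter_subset_inter_left U hST))

theorem image_homeomorph (hS : IsKappaDense κ S) (e : P ≃ₜ Q) : IsKappaDense κ (e '' S) := by
  intro U hU hne
  rw [← image_inter_preimage, mk_image_eq e.injective]
  exact hS _ (hU.preimage e.continuous) (hne.preimage e.surjective)

end IsKappaDense

theorem isKappaDense_of_le_mk_inter {P : Type u} [TopologicalSpace P] {κ : Cardinal.{u}}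
    {A : ℕ → Set P} (hA : ∀ U, IsOpen U → U.Nonempty → ∃ n, A n ⊆ U) {S : Set P}
    (hS : #S ≤ κ) (hSA : ∀ n, κ ≤ #(S ∩ A n : Set P)) : IsKappaDense κ S := by
  intro U hU hne
  obtain ⟨n, hn⟩ := hA U hU hne
  exact ((mk_le_mk_of_subset inter_subset_left).trans hS).antisymm <|
    (hSA n).trans (mk_le_mk_of_subset (inter_subset_inter_right S hn))

theorem mk_iUnion_nat_le {α : Type u} {κ : Cardinal.{u}} (hκ : ℵ₀ ≤ κ) {A : ℕ → Set α}
    (hA : ∀ n, #(A n) ≤ κ) : #(⋃ n, A n) ≤ κ := by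
  have h := mk_iUnion_le_lift A
  simp only [lift_uzero, mk_nat, lift_aleph0] at h
  exact h.trans ((mul_le_mul' le_rfl (ciSup_le' hA)).trans (aleph0_mul_eq hκ).le)

theorem isKappaDense_iUnion {P : Type u} [TopologicalSpace P] {κ : Cardinal.{u}} (hκ : ℵ₀ ≤ κ)
    {A : ℕ → Set P} (hA : ∀ U, IsOpen U → U.Nonempty → ∃ n, A n ⊆ U) (hAκ : ∀ n, #(A n) = κ) :
    IsKappaDense κ (⋃ n, A n) := by
  refine isKappaDense_of_le_mk_inter hA ?_ fun n => ?_
  · exact mk_iUnion_nat_le hκ fun n => (hAκ n).le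
  · rw [← hAκ n]
    exact mk_le_mk_of_subset (subset_inter (subset_iUnion A n) subset_rfl)

theorem exists_disjoint_image_add {G : Type u} [AddGroup G] (hG : ℵ₀ ≤ #G) {R F : Set G}
    (hR : #R < #G) (hF : #F < #G) : ∃ t : G, Disjoint ((t + ·) '' R) F := by
  obtain ⟨t, ht⟩ :=
    compl_nonempty_of_mk_lt_mk (S := F - R) (mk_sub_le.trans_lt (mul_lt_of_lt hG hF hR))
  refine ⟨t, disjoint_left.2 ?_⟩
  rintro _ ⟨r, hr, rfl⟩ htr
  exact ht ⟨t + r, htr, r, hr, add_sub_cancel_right t r⟩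

section SigmaIdeal

variable {P : Type*} {L : Set (Set P)}

theorem union_mem_of_iUnion_mem (hLsigma : ∀ f : ℕ → Set P, (∀ n, f n ∈ L) → (⋃ n, f n) ∈ L)
    {A B : Set P} (hA : A ∈ L) (hB : B ∈ L) : A ∪ B ∈ L := by
  convert hLsigma (fun n => if n = 0 then A else B) (fun n => by split_ifs <;> assumption) using 1
  refine (union_subset (subset_iUnion_of_subset 0 ?_) (subset_iUnion_of_subset 1 ?_)).antisymm
    (iUnion_subset fun n => ?_)
  · simp
  · simp
  · split_ifs
    exacts [subset_union_left, subset_union_right]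

theorem singleton_mem_of_add_invariant [AddGroup P] (hLsub : ∀ A ∈ L, ∀ B ⊆ A, B ∈ L)
    (hLtrans : ∀ A ∈ L, ∀ t : P, (fun x => t + x) '' A ∈ L) {A : Set P} (hA : A ∈ L)
    (hne : A.Nonempty) (y : P) : {y} ∈ L := by
  obtain ⟨a, ha⟩ := hne
  simpa using hLtrans {a} (hLsub A hA {a} (singleton_subset_iff.2 ha)) (y - a)

end SigmaIdeal

theorem exists_seq_forall_isOpen_exists_subset {P : Type u} [TopologicalSpace P]
    [SecondCountableTopology P] [Nonempty P] {L : Set (Set P)} {κ : Cardinal.{u}}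
    (hLopen : ∀ U : Set P, IsOpen U → U.Nonempty → ∃ A ∈ L, A ⊆ U ∧ #A = κ) :
    ∃ A : ℕ → Set P, (∀ n, A n ∈ L) ∧ (∀ n, #(A n) = κ) ∧
      ∀ U, IsOpen U → U.Nonempty → ∃ n, A n ⊆ U := by
  obtain ⟨b, hbc, hbe, hb⟩ := TopologicalSpace.exists_countable_basis P
  obtain ⟨x⟩ := ‹Nonempty P›
  obtain ⟨v, hv, -⟩ := hb.exists_subset_of_mem_open (mem_univ x) isOpen_univ
  obtain ⟨U, rfl⟩ := hbc.exists_eq_range ⟨v, hv⟩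
  choose A hAL hAU hAκ using fun n => hLopen (U n) (hb.isOpen (mem_range_self n))
    (nonempty_iff_ne_empty.2 fun h => hbe (h ▸ mem_range_self n))
  refine ⟨A, hAL, hAκ, fun V hV ⟨x, hx⟩ => ?_⟩
  obtain ⟨_, ⟨n, rfl⟩, -, hnV⟩ := hb.exists_subset_of_mem_open hx hV
  exact ⟨n, (hAU n).trans hnV⟩

theorem exists_pairwise_disjoint_le_mk_inter {α : Type u} {κ : Cardinal.{u}} (hκ : ℵ₀ ≤ κ)
    {A : ℕ → Set α} (hAκ : ∀ n, #(A n) = κ) {J : Type u} (hJ : #J ≤ κ) :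
    ∃ T : J → Set α, Pairwise (Disjoint on T) ∧ (∀ j, T j ⊆ ⋃ n, A n) ∧
      ∀ j n, κ ≤ #(T j ∩ A n : Set α) := by
  -- Index the triples `((j, n), ξ)` by `ι`, of order type `κ`, pick distinct points `p k ∈ A n`
  -- by recursion, and let `T j` collect the points whose index has first coordinate `j`.
  let ι := κ.ord.ToType
  have hι : #ι = κ := by simp [ι]
  obtain ⟨e⟩ : Nonempty (ι ≃ (ι × ℕ) × ι) := Cardinal.eq.1 <| by
    simp [hι, mul_aleph0_eq hκ, mul_eq_self hκ]
  obtain ⟨f⟩ : Nonempty (J ↪ ι) := by rwa [← le_def, hι]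
  obtain ⟨p, hp⟩ := exists_transfinite_choice (fun k (g : Iio k → α) => A (e k).1.2 \ range g)
    fun k g => sdiff_nonempty_of_mk_lt_mk <| by
      rw [hAκ]
      exact mk_range_le.trans_lt (by simpa [ι] using mk_Iio_lt k)
  have hp_inj : Injective p := by
    intro a b hab
    by_contra hne
    rcases lt_or_gt_of_ne hne with h | h
    · exact (hp b).2 ⟨⟨a, h⟩, hab⟩
    · exact (hp a).2 ⟨⟨b, h⟩, hab.symm⟩
  refine ⟨fun j => p '' {k | (e k).1.1 = f j}, fun i j hij => ?_, fun j => ?_, fun j n => ?_⟩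
  · refine (disjoint_image_iff hp_inj).2 (disjoint_left.2 fun k hi hj => hij (f.injective ?_))
    exact hi.symm.trans hj
  · rintro _ ⟨k, -, rfl⟩
    exact mem_iUnion.2 ⟨_, (hp k).1⟩
  · have hfiber :
        range (fun ξ => p (e.symm ((f j, n), ξ))) ⊆ p '' {k | (e k).1.1 = f j} ∩ A n := by
      rintro _ ⟨ξ, rfl⟩
      refine ⟨⟨_, by simp, rfl⟩, ?_⟩
      simpa using (hp (e.symm ((f j, n), ξ))).1
    calc κ = #(range fun ξ => p (e.symm ((f j, n), ξ))) := by
          rw [mk_range_eq _ fun ξ ξ' h => by simpa using hp_inj h, hι]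
      _ ≤ _ := mk_le_mk_of_subset hfiber

section CoreFamily

variable {P : Type u} [TopologicalSpace P] {L : Set (Set P)} {κ : Cardinal.{u}}

/-- The `i`-th piece of the partition will be `B i`, plus a subset of the reserve `Z i` chosen so
as to break every homeomorphism with an earlier piece, plus possibly one point of `X i`. -/
structure IsCoreFamily {ι : Type*} (L : Set (Set P)) (κ : Cardinal) (X B Z : ι → Set P) :
    Prop where
  body_mem (i) : B i ∈ L
  reserve_mem (i) : Z i ∈ L
  isKappaDense (i) : IsKappaDense κ (B i)
  mk_reserve (i) : #(Z i) = κ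
  disjoint_body_reserve (i) : Disjoint (B i) (Z i)
  pairwise_disjoint : Pairwise (Disjoint on fun i => B i ∪ Z i)
  disjoint_avoid (i) : Disjoint (B i ∪ Z i) (X i)

theorem exists_isCoreFamily_of_lt_mk [AddGroup P] [SeparatelyContinuousAdd P]
    (hLtrans : ∀ A ∈ L, ∀ t : P, (fun x => t + x) '' A ∈ L) (hκ : ℵ₀ ≤ κ) (hκP : κ < #P)
    {D : Set P} (hDL : D ∈ L) (hD : IsKappaDense κ D) {ι : Type u} [LinearOrder ι]
    [WellFoundedLT ι] (hι : ∀ i : ι, #(Iio i) < #P) (X : ι → Set P) (hX : ∀ i, #(X i) < #P) :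
    ∃ B Z : ι → Set P, IsCoreFamily L κ X B Z := by
  have hP : ℵ₀ ≤ #P := hκ.trans hκP.le
  have : Nonempty P := by rw [← mk_ne_zero_iff]; exact (aleph0_pos.trans_le hP).ne'
  have hDκ : #D = κ := hD.mk_eq
  obtain ⟨s, hs⟩ := exists_disjoint_image_add hP (hDκ ▸ hκP) (hDκ ▸ hκP)
  set R := D ∪ (s + ·) '' D
  have hR : #R < #P := (mk_union_le _ _).trans_lt <| add_lt_of_lt hP (hDκ ▸ hκP) <| by
    rwa [mk_image_eq (add_right_injective s), hDκ]
  obtain ⟨t, ht⟩ := exists_transfinite_choice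
    (fun i (g : Iio i → P) => {t | Disjoint ((t + ·) '' R) ((⋃ j, (g j + ·) '' R) ∪ X i)})
    fun i g => exists_disjoint_image_add hP hR <| (mk_union_le _ _).trans_lt <|
      add_lt_of_lt hP ((mk_iUnion_le _).trans_lt <|
        mul_lt_of_lt hP (hι i) ((ciSup_le' fun _ => mk_image_le).trans_lt hR)) (hX i)
  have hcore (i) : (t i + ·) '' D ∪ (t i + ·) '' ((s + ·) '' D) = (t i + ·) '' R :=
    (image_union _ _ _).symm
  refine ⟨fun i => (t i + ·) '' D, fun i => (t i + ·) '' ((s + ·) '' D),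
    fun i => hLtrans _ hDL _, fun i => hLtrans _ (hLtrans _ hDL _) _,
    fun i => hD.image_homeomorph (Homeomorph.addLeft (t i)),
    fun i => by simp only [mk_image_eq (add_right_injective _), hDκ],
    fun i => (disjoint_image_iff (add_right_injective _)).2 hs.symm, ?_, fun i => ?_⟩
  · refine (pairwise_disjoint_on _).2 fun j i hji => ?_
    simp only [hcore]
    exact ((ht i).mono_right <|
      subset_union_left.trans' (subset_iUnion_of_subset ⟨j, hji⟩ subset_rfl)).symm
  · simp only [hcore]
    exact (ht i).mono_right subset_union_right

theorem exists_isCoreFamily_of_mk_le (hLsub : ∀ A ∈ L, ∀ B ⊆ A, B ∈ L)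
    (hLsigma : ∀ f : ℕ → Set P, (∀ n, f n ∈ L) → (⋃ n, f n) ∈ L) (hκ : ℵ₀ ≤ κ)
    {A : ℕ → Set P} (hAL : ∀ n, A n ∈ L) (hAκ : ∀ n, #(A n) = κ)
    (hA : ∀ U, IsOpen U → U.Nonempty → ∃ n, A n ⊆ U) {ι : Type u} (hι : #ι ≤ κ)
    (X : ι → Set P) (hX : ∀ i, #(X i) < κ) :
    ∃ B Z : ι → Set P, IsCoreFamily L κ X B Z := by
  obtain ⟨T, hTdisj, hTsub, hTA⟩ := exists_pairwise_disjoint_le_mk_inter hκ hAκ (J := ι × Bool)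
    (by simpa using
      (mul_le_mul' hι ((natCast_lt_aleph0 (n := 2)).le.trans hκ)).trans (mul_eq_self hκ).le)
  set C : ι → Bool → Set P := fun i b => T (i, b) \ X i
  have hCsub (i b) : C i b ⊆ ⋃ n, A n := sdiff_subset.trans (hTsub _)
  have hCmk (i b) : #(C i b) ≤ κ :=
    (mk_le_mk_of_subset (hCsub i b)).trans (mk_iUnion_nat_le hκ fun n => (hAκ n).le)
  have hCA (i b n) : κ ≤ #(C i b ∩ A n : Set P) := by
    refine le_trans ?_ (mk_le_mk_of_subset (sdiff_inter_right_comm (T (i, b)) (X i) (A n)).ge)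
    rw [mk_sdiff_eq_of_mk_lt (hκ.trans (hTA _ n)) ((hX i).trans_le (hTA _ n))]
    exact hTA _ n
  have hCdisj {i j} (b b') (hij : i ≠ j) : Disjoint (C i b) (C j b') :=
    (hTdisj fun h => hij (congrArg Prod.fst h)).mono sdiff_subset sdiff_subset
  refine ⟨fun i => C i false, fun i => C i true,
    fun i => hLsub _ (hLsigma A hAL) _ (hCsub i _), fun i => hLsub _ (hLsigma A hAL) _ (hCsub i _),
    fun i => isKappaDense_of_le_mk_inter hA (hCmk i _) (hCA i _),
    fun i => (hCmk i _).antisymm ((hCA i true 0).trans (mk_le_mk_of_subset inter_subset_left)),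
    fun i => (hTdisj (by simp)).mono sdiff_subset sdiff_subset, fun i j hij => ?_,
    fun i => disjoint_union_left.2 ⟨disjoint_sdiff_left, disjoint_sdiff_left⟩⟩
  exact disjoint_union_left.2 ⟨disjoint_union_right.2 ⟨hCdisj _ _ hij, hCdisj _ _ hij⟩,
    disjoint_union_right.2 ⟨hCdisj _ _ hij, hCdisj _ _ hij⟩⟩

end CoreFamily

theorem union_union_sdiff_inter_eq {P : Type*} {B S Z W : Set P} {y : P} (hBZ : Disjoint B Z)
    (hy : y ∉ Z) (hS : S ⊆ Z) : (B ∪ S ∪ ({y} \ W)) ∩ Z = S := by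
  rw [union_inter_distrib_right, union_inter_distrib_right, hBZ.inter_eq, empty_union,
    inter_eq_left.2 hS, ((disjoint_singleton_left.2 hy).mono_left sdiff_subset).inter_eq,
    union_empty]

theorem mk_union_union_singleton_le {P : Type u} {κ : Cardinal.{u}} {B Z : Set P} (hκ : ℵ₀ ≤ κ)
    (hB : #B ≤ κ) (hZ : #Z ≤ κ) (y : P) : #(B ∪ Z ∪ {y} : Set P) ≤ κ :=
  calc #(B ∪ Z ∪ {y} : Set P) ≤ #B + #Z + 1 :=
        (mk_union_le _ _).trans (by rw [mk_singleton]; gcongr; exact mk_union_le _ _)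
    _ ≤ κ + κ + 1 := by gcongr
    _ = κ := by rw [add_eq_self hκ, add_one_eq hκ]

section Pieces

variable {P : Type u} {ι : Type u} [LinearOrder ι] {L : Set (Set P)} {κ : Cardinal.{u}}
  {x : ι → P} {B Z S piece : ι → Set P}

theorem iUnion_eq_univ_of_eq_union (hx : Surjective x)
    (hpiece : ∀ i, piece i = B i ∪ S i ∪ ({x i} \ ⋃ j : Iio i, piece j)) :
    ⋃ i, piece i = Set.univ := by
  refine eq_univ_of_forall fun p => ?_
  obtain ⟨i, rfl⟩ := hx p
  by_cases h : x i ∈ ⋃ j : Iio i, piece j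
  · obtain ⟨j, hj⟩ := mem_iUnion.1 h
    exact mem_iUnion.2 ⟨j, hj⟩
  · exact mem_iUnion.2 ⟨i, hpiece i ▸ Or.inr ⟨rfl, h⟩⟩

variable [TopologicalSpace P]

theorem exists_subset_forall_isEmpty_homeomorph [T2Space P] [SecondCountableTopology P]
    (hP : #P ≤ 𝔠) (hι : #ι ≤ 𝔠) (hbig : 𝔠 < 2 ^ κ)
    (hBZ : IsCoreFamily L κ (fun i => x '' Iic i) B Z) (i : ι) (g : Iio i → Set P) :
    ∃ S ⊆ Z i, ∀ j, IsEmpty (g j ≃ₜ ↥(B i ∪ S ∪ ({x i} \ ⋃ j, g j))) := by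
  have hx : x i ∉ Z i := fun h =>
    (hBZ.disjoint_avoid i).notMem_of_mem_left (Or.inr h) (mem_image_of_mem x (le_refl i))
  let Φ (S : Set (Z i)) : Set P := B i ∪ (↑) '' S ∪ ({x i} \ ⋃ j, g j)
  have hBZ' := hBZ.disjoint_body_reserve i
  have hΦ : Injective Φ := fun S S' h => image_injective.2 Subtype.val_injective <| by
    rw [← union_union_sdiff_inter_eq hBZ' hx (Subtype.coe_image_subset _ S),
      ← union_union_sdiff_inter_eq hBZ' hx (Subtype.coe_image_subset _ S')]
    exact congrArg (· ∩ Z i) h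
  obtain ⟨S, hS⟩ := exists_forall_isEmpty_homeomorph hP ((mk_set_le _).trans hι) g
    (by rwa [mk_set, hBZ.mk_reserve]) hΦ
  exact ⟨_, Subtype.coe_image_subset _ S, hS⟩

theorem pairwise_disjoint_of_eq_union (hBZ : IsCoreFamily L κ (fun i => x '' Iic i) B Z)
    (hSZ : ∀ i, S i ⊆ Z i)
    (hpiece : ∀ i, piece i = B i ∪ S i ∪ ({x i} \ ⋃ j : Iio i, piece j)) :
    Pairwise (Disjoint on piece) := by
  refine (pairwise_disjoint_on _).2 fun j i hji => ?_
  rw [hpiece i, disjoint_union_right]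
  refine ⟨?_, disjoint_sdiff_right.mono_left (subset_iUnion_of_subset ⟨j, hji⟩ subset_rfl)⟩
  have hj : piece j ⊆ (B j ∪ Z j) ∪ {x j} := hpiece j ▸
    union_subset_union (union_subset_union_right _ (hSZ j)) sdiff_subset
  refine Disjoint.mono hj (union_subset_union_right _ (hSZ i)) (disjoint_union_left.2
    ⟨hBZ.pairwise_disjoint hji.ne, disjoint_singleton_left.2 fun h => ?_⟩)
  exact (hBZ.disjoint_avoid i).notMem_of_mem_left h (mem_image_of_mem x hji.le)

theorem exists_pieces_of_isCoreFamily [T2Space P] [SecondCountableTopology P] [WellFoundedLT ι]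
    (hP : #P ≤ 𝔠) (hι : #ι ≤ 𝔠) (hx : Surjective x) (hκ : ℵ₀ ≤ κ) (hbig : 𝔠 < 2 ^ κ)
    (hLsub : ∀ A ∈ L, ∀ B ⊆ A, B ∈ L) (hLunion : ∀ A ∈ L, ∀ B ∈ L, A ∪ B ∈ L)
    (hLsingle : ∀ y, {y} ∈ L) (hBZ : IsCoreFamily L κ (fun i => x '' Iic i) B Z) :
    ∃ piece : ι → Set P, (∀ i, piece i ∈ L ∧ IsKappaDense κ (piece i)) ∧
      Pairwise (Disjoint on piece) ∧ ⋃ i, piece i = Set.univ ∧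
      Pairwise fun i j => IsEmpty (piece i ≃ₜ piece j) := by
  obtain ⟨piece, hpiece⟩ := exists_transfinite_choice (fun i (g : Iio i → Set P) =>
      {Q | ∃ S ⊆ Z i, Q = B i ∪ S ∪ ({x i} \ ⋃ j, g j) ∧ ∀ j, IsEmpty (g j ≃ₜ Q)})
    fun i g => by
      obtain ⟨S, hSZ, hS⟩ := exists_subset_forall_isEmpty_homeomorph hP hι hbig hBZ i g
      exact ⟨_, S, hSZ, rfl, hS⟩
  choose S hSZ hpiece_eq hnh using hpiece
  refine ⟨piece, fun i => ⟨?_, ?_⟩, pairwise_disjoint_of_eq_union hBZ hSZ hpiece_eq,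
    iUnion_eq_univ_of_eq_union hx hpiece_eq, fun i j hij => ?_⟩
  · rw [hpiece_eq i]
    exact hLunion _ (hLunion _ (hBZ.body_mem i) _ (hLsub _ (hBZ.reserve_mem i) _ (hSZ i))) _
      (hLsub _ (hLsingle _) _ sdiff_subset)
  · have : Nonempty P := ⟨x i⟩
    refine (hBZ.isKappaDense i).mono (hpiece_eq i ▸ subset_union_left.trans subset_union_left)
      ((mk_le_mk_of_subset ?_).trans (mk_union_union_singleton_le hκ
        (hBZ.isKappaDense i).mk_eq.le (hBZ.mk_reserve i).le (x i)))
    exact hpiece_eq i ▸ union_subset_union (union_subset_union_right _ (hSZ i)) sdiff_subset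
  · rcases hij.lt_or_gt with h | h
    · exact hnh j ⟨i, h⟩
    · exact ⟨fun e => (hnh i ⟨j, h⟩).false e.symm⟩

end Pieces

theorem partition_into_nonhomeomorphic_kappa_dense_sets_in_ideal_general
    (P : Type*) [TopologicalSpace P] [PolishSpace P] [AddCommGroup P]
    [IsTopologicalAddGroup P] [Uncountable P]
    (κ : Cardinal) (hκ : Cardinal.aleph0 ≤ κ) (hbig : Cardinal.continuum < 2 ^ κ)
    (L : Set (Set P))
    (hLsub : ∀ A ∈ L, ∀ B ⊆ A, B ∈ L)
    (hLsigma : ∀ f : ℕ → Set P, (∀ n, f n ∈ L) → (⋃ n, f n) ∈ L)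
    (hLtrans : ∀ A ∈ L, ∀ t : P, (fun x => t + x) '' A ∈ L)
    (hLopen : ∀ U : Set P, IsOpen U → U.Nonempty →
      ∃ A ∈ L, A ⊆ U ∧ Cardinal.mk A = κ) :
    ∃ Part : Set (Set P), Cardinal.mk Part = Cardinal.continuum ∧
      Part.PairwiseDisjoint id ∧ ⋃₀ Part = Set.univ ∧
      (∀ A ∈ Part, A ∈ L ∧ IsKappaDense κ A) ∧
      ∀ A ∈ Part, ∀ B ∈ Part, A ≠ B → IsEmpty (↥A ≃ₜ ↥B) := by
  have hPc : #P = 𝔠 := mk_eq_continuum_of_polishSpace P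
  have hP : ℵ₀ ≤ #P := hPc ▸ aleph0_le_continuum
  obtain ⟨A, hAL, hAκ, hA⟩ := exists_seq_forall_isOpen_exists_subset hLopen
  have hD := isKappaDense_iUnion hκ hA hAκ
  have hDne := hD.nonempty (aleph0_pos.trans_le hκ).ne'
  obtain ⟨x⟩ : Nonempty ((#P).ord.ToType ≃ P) := Cardinal.eq.1 (by simp)
  have hX (i) : #(x '' Iic i) < #P :=
    mk_image_le.trans_lt (by simpa using mk_Iic_lt i (by simp) (by simp [hP]))
  obtain ⟨B, Z, hBZ⟩ : ∃ B Z, IsCoreFamily L κ (fun i => x '' Iic i) B Z := by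
    rcases (hD.mk_eq ▸ mk_set_le _ : κ ≤ #P).lt_or_eq with hlt | rfl
    · exact exists_isCoreFamily_of_lt_mk hLtrans hκ hlt (hLsigma A hAL) hD
        (fun i => by simpa using mk_Iio_lt i) _ hX
    · exact exists_isCoreFamily_of_mk_le hLsub hLsigma hκ hAL hAκ hA (by simp) _ hX
  obtain ⟨piece, hpiece, hdisj, hcover, hnh⟩ := exists_pieces_of_isCoreFamily hPc.le
    (by simp [hPc]) x.surjective hκ hbig hLsub
    (fun _ hA _ hB => union_mem_of_iUnion_mem hLsigma hA hB)
    (singleton_mem_of_add_invariant hLsub hLtrans (hLsigma A hAL) hDne) hBZ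
  have hinj : Injective piece := pairwise_ne_iff_injective.1 fun i j h =>
    (hdisj h).ne ((hpiece i).2.nonempty (aleph0_pos.trans_le hκ).ne').ne_empty
  refine ⟨range piece, by simp [mk_range_eq _ hinj, hPc], hdisj.range_pairwise,
    by rw [sUnion_range, hcover], forall_mem_range.2 hpiece, ?_⟩
  rintro _ ⟨i, rfl⟩ _ ⟨j, rfl⟩ hij
  exact hnh (ne_of_apply_ne piece hij)

theorem partition_into_nonhomeomorphic_kappa_dense_sets_in_ideal
    (P : Type*) [TopologicalSpace P] [PolishSpace P] [AddCommGroup P]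
    [IsTopologicalAddGroup P] [Uncountable P]
    (hP : {x : P | IsOfFinAddOrder x}.Countable ∨
      ∃ e : P ≃+ CantorGroup, Continuous e ∧ Continuous e.symm)
    (κ : Cardinal) (hκ : Cardinal.aleph0 ≤ κ) (hbig : Cardinal.continuum < 2 ^ κ)
    (L : Set (Set P))
    (hLsub : ∀ A ∈ L, ∀ B ⊆ A, B ∈ L)
    (hLsigma : ∀ f : ℕ → Set P, (∀ n, f n ∈ L) → (⋃ n, f n) ∈ L)
    (hLtrans : ∀ A ∈ L, ∀ t : P, (fun x => t + x) '' A ∈ L)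
    (hLopen : ∀ U : Set P, IsOpen U → U.Nonempty →
      ∃ A ∈ L, A ⊆ U ∧ Cardinal.mk A = κ) :
    ∃ Part : Set (Set P), Cardinal.mk Part = Cardinal.continuum ∧
      Part.PairwiseDisjoint id ∧ ⋃₀ Part = Set.univ ∧
      (∀ A ∈ Part, A ∈ L ∧ IsKappaDense κ A) ∧
      ∀ A ∈ Part, ∀ B ∈ Part, A ≠ B → IsEmpty (↥A ≃ₜ ↥B) :=
  partition_into_nonhomeomorphic_kappa_dense_sets_in_ideal_general P κ hκ hbig L hLsub hLsigma
    hLtrans hLopen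
end
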